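/- arXiv:2206.05366 — 13 statements merged into one kernel-verified Lean document; each statement's English description precedes it below -/
import Mathlib

section
/- For every real number x with 0 < x ≤ 1/3, the series ∑_{n=1}^∞ m(n)·xⁿ converges and ∑_{n=1}^∞ m(n)·xⁿ = (1 − x − √(1 − 2x − 3x²))/(2x). -/
/-!
Put `aₙ = m(n) xⁿ`, so that `∑ aₙ Xⁿ = M(xX)` satisfies `F = xX (1 + F + F²)`. Comparing
coefficients gives `S_{N+1} ≤ x (1 + S_N + S_N²)` for the partial sums `S_N`, so the partial sums
stay below every nonnegative fixed point of `t ↦ x (1 + t + t²)`, in particular below the smaller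
root `L = (1 - x - √(1 - 2x - 3x²)) / (2x)`, which is real because `x ≤ 1/3`. Hence the series
converges, and by the Cauchy product its sum is itself a fixed point; lying below `L`, it is `L`.
-/

open Finset

theorem sum_range_sum_antidiagonal_mul_le_sq {a : ℕ → ℝ} (ha : ∀ n, 0 ≤ a n) (N : ℕ) :
    ∑ n ∈ range N, ∑ p ∈ antidiagonal n, a p.1 * a p.2 ≤ (∑ n ∈ range N, a n) ^ 2 := by
  rw [sq, sum_mul_sum]
  simp_rw [Nat.sum_antidiagonal_eq_sum_range_succ (fun i j => a i * a j)]
  rw [sum_range_diag_flip N fun i j => a i * a j]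
  exact sum_le_sum fun i _ => sum_le_sum_of_subset_of_nonneg (range_mono (Nat.sub_le N i))
    fun j _ _ => mul_nonneg (ha i) (ha j)

theorem HasSum.sum_antidiagonal_mul_self_of_nonneg {a : ℕ → ℝ} {T : ℝ} (h : HasSum a T)
    (ha : ∀ n, 0 ≤ a n) : HasSum (fun n => ∑ p ∈ antidiagonal n, a p.1 * a p.2) (T * T) := by
  have hprod := h.summable.mul_of_nonneg h.summable ha ha
  have hconv := (summable_sum_mul_antidiagonal_of_summable_mul hprod).hasSum
  rwa [← h.summable.tsum_mul_tsum_eq_tsum_sum_antidiagonal h.summable hprod, h.tsum_eq] at hconv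

/-- `a` is the coefficient sequence of a power series `F` with `F = x X (1 + F + F²)`. -/
structure IsMotzkinSeq {R : Type*} [CommSemiring R] (x : R) (a : ℕ → R) : Prop where
  zero : a 0 = 0
  succ (n : ℕ) :
    a (n + 1) = x * ((if n = 0 then 1 else 0) + a n + ∑ p ∈ antidiagonal n, a p.1 * a p.2)

theorem isMotzkinSeq_one {m : ℕ → ℕ} (hm0 : m 0 = 0) (hm1 : m 1 = 1)
    (hm : ∀ n, 2 ≤ n → m n = m (n - 1) + ∑ i ∈ Icc 1 (n - 2), m i * m (n - 1 - i)) :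
    IsMotzkinSeq (1 : ℝ) fun n => (m n : ℝ) := by
  refine ⟨by simp [hm0], fun n => ?_⟩
  suffices m (n + 1) = (if n = 0 then 1 else 0) + m n + ∑ p ∈ antidiagonal n, m p.1 * m p.2 by
    rw [one_mul]; exact_mod_cast this
  rcases n with _ | n
  · simp [hm0, hm1]
  rw [hm (n + 2) le_add_self, if_neg n.succ_ne_zero, zero_add,
    Nat.sum_antidiagonal_eq_sum_range_succ fun i j => m i * m j, show n + 2 - 1 = n + 1 from rfl]
  congr 1
  refine sum_subset (fun i hi => by simp only [mem_Icc, mem_range] at hi ⊢; omega) fun i hi hi' => ?_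
  obtain rfl | rfl : i = 0 ∨ i = n + 1 := by simp only [mem_Icc, mem_range] at hi hi'; omega
  all_goals simp [hm0]

theorem IsMotzkinSeq.mul_pow {R : Type*} [CommSemiring R] {c : ℕ → R} (h : IsMotzkinSeq 1 c)
    (x : R) : IsMotzkinSeq x fun n => c n * x ^ n := by
  refine ⟨by simp [h.zero], fun n => ?_⟩
  have hdelta : (if n = 0 then (1 : R) else 0) * x ^ (n + 1) = x * if n = 0 then 1 else 0 := by
    split_ifs with hn <;> simp [hn]
  have hconv : (∑ p ∈ antidiagonal n, c p.1 * c p.2) * x ^ (n + 1)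
      = x * ∑ p ∈ antidiagonal n, c p.1 * x ^ p.1 * (c p.2 * x ^ p.2) := by
    rw [sum_mul, mul_sum]
    refine sum_congr rfl fun p hp => ?_
    rw [← mem_antidiagonal.1 hp]
    ring
  rw [h.succ, one_mul, add_mul, add_mul, hdelta, hconv]
  ring

namespace IsMotzkinSeq

variable {a : ℕ → ℝ} {x : ℝ}

theorem sum_range_succ_le (h : IsMotzkinSeq x a) (hx : 0 ≤ x) (ha : ∀ n, 0 ≤ a n) (N : ℕ) :
    ∑ n ∈ range (N + 1), a n ≤ x * (1 + ∑ n ∈ range N, a n + (∑ n ∈ range N, a n) ^ 2) := by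
  rw [sum_range_succ', h.zero, add_zero]
  simp_rw [h.succ, ← mul_sum, sum_add_distrib]
  gcongr
  · rw [sum_ite_eq']
    split_ifs <;> norm_num
  · exact sum_range_sum_antidiagonal_mul_le_sq ha N

theorem sum_range_le (h : IsMotzkinSeq x a) (hx : 0 ≤ x) (ha : ∀ n, 0 ≤ a n) {L : ℝ}
    (hL0 : 0 ≤ L) (hL : x * (1 + L + L ^ 2) ≤ L) (N : ℕ) : ∑ n ∈ range N, a n ≤ L := by
  induction N with
  | zero => simpa using hL0
  | succ N ih =>
    have hS : 0 ≤ ∑ n ∈ range N, a n := sum_nonneg fun n _ => ha n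
    calc ∑ n ∈ range (N + 1), a n
        ≤ x * (1 + ∑ n ∈ range N, a n + (∑ n ∈ range N, a n) ^ 2) := h.sum_range_succ_le hx ha N
      _ ≤ x * (1 + L + L ^ 2) := by gcongr
      _ ≤ L := hL

theorem eq_of_hasSum (h : IsMotzkinSeq x a) (ha : ∀ n, 0 ≤ a n) {T : ℝ} (hT : HasSum a T) :
    x * (1 + T + T ^ 2) = T := by
  have hshift : HasSum (fun n => a (n + 1)) T := by
    simpa [h.zero] using (hasSum_nat_add_iff' 1).2 hT
  have hrhs := (((hasSum_ite_eq 0 (1 : ℝ)).add hT).add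
    (hT.sum_antidiagonal_mul_self_of_nonneg ha)).mul_left x
  rw [← funext h.succ] at hrhs
  rw [sq]
  exact hrhs.unique hshift

end IsMotzkinSeq

section SmallerRoot

variable {x L : ℝ}

theorem fixedPoint_of_two_mul_eq (hx : 0 < x) (hx' : x ≤ 1 / 3)
    (hL : 2 * x * L = 1 - x - √(1 - 2 * x - 3 * x ^ 2)) : x * (1 + L + L ^ 2) = L := by
  have hD := Real.sq_sqrt (show 0 ≤ 1 - 2 * x - 3 * x ^ 2 by nlinarith)
  have h4 : 4 * x * (x * (1 + L + L ^ 2) - L) = 0 := by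
    linear_combination (2 * x * L + x - 1 - √(1 - 2 * x - 3 * x ^ 2)) * hL + hD
  have := (mul_eq_zero.1 h4).resolve_left (by positivity)
  linarith

theorem nonneg_of_two_mul_eq (hx : 0 < x) (hx' : x ≤ 1 / 3)
    (hL : 2 * x * L = 1 - x - √(1 - 2 * x - 3 * x ^ 2)) : 0 ≤ L := by
  have hs : √(1 - 2 * x - 3 * x ^ 2) ≤ 1 - x :=
    Real.sqrt_le_iff.2 ⟨by linarith, by nlinarith⟩
  nlinarith

theorem eq_of_fixedPoint_of_le (hx : 0 < x) {T : ℝ} (hT : x * (1 + T + T ^ 2) = T)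
    (hL : 2 * x * L = 1 - x - √(1 - 2 * x - 3 * x ^ 2)) (hTL : T ≤ L) : T = L := by
  have hsq : (2 * x * T + x - 1) ^ 2 = 1 - 2 * x - 3 * x ^ 2 := by
    linear_combination 4 * x * hT
  have hneg : 2 * x * T + x - 1 ≤ 0 := by
    nlinarith [Real.sqrt_nonneg (1 - 2 * x - 3 * x ^ 2)]
  have hs : √(1 - 2 * x - 3 * x ^ 2) = 1 - x - 2 * x * T := by
    rw [← hsq, Real.sqrt_sq_eq_abs, abs_of_nonpos hneg]
    ring
  exact mul_left_cancel₀ (by positivity : 2 * x ≠ 0) (by linarith)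

end SmallerRoot

/-- For every real `x` with `0 < x ≤ 1/3`, the series `∑_{n≥1} m(n)·xⁿ`
(where `m` is the Motzkin tree counting sequence, with `m 0 = 0`) converges to
`(1 − x − √(1 − 2x − 3x²))/(2x)`. Since `m 0 = 0`, summing over all `n : ℕ` is the same
as summing over `n ≥ 1`. -/
theorem motzkin_generating_function_value
    (m : ℕ → ℕ) (hm0 : m 0 = 0) (hm1 : m 1 = 1)
    (hm : ∀ n, 2 ≤ n →
      m n = m (n - 1) + ∑ i ∈ Finset.Icc 1 (n - 2), m i * m (n - 1 - i))
    (x : ℝ) (hx : 0 < x) (hx' : x ≤ 1 / 3) :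
    HasSum (fun n : ℕ => (m n : ℝ) * x ^ n)
      ((1 - x - Real.sqrt (1 - 2 * x - 3 * x ^ 2)) / (2 * x)) := by
  have hL : 2 * x * ((1 - x - √(1 - 2 * x - 3 * x ^ 2)) / (2 * x))
      = 1 - x - √(1 - 2 * x - 3 * x ^ 2) := by
    field_simp
  have h := (isMotzkinSeq_one hm0 hm1 hm).mul_pow x
  have ha : ∀ n, 0 ≤ (m n : ℝ) * x ^ n := fun n => by positivity
  have hbound := h.sum_range_le hx.le ha (nonneg_of_two_mul_eq hx hx' hL)
    (fixedPoint_of_two_mul_eq hx hx' hL).le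
  have hsum := (summable_of_sum_range_le ha hbound).hasSum
  rwa [eq_of_fixedPoint_of_le hx (h.eq_of_hasSum ha hsum) hL
    (Real.tsum_le_of_sum_range_le ha hbound)] at hsum
end

section
/- Let a, b : ℕ → ℝ and let α, β, r be real numbers with α > β ≥ 0. Suppose: (i) the power series ∑ a(n)xⁿ has radius of convergence α; (ii) the power series ∑ b(n)xⁿ has radius of convergence β; (iii) b(n) ≠ 0 for all sufficiently large n and b(n−1)/b(n) → r as n → ∞; and (iv) A(r) := ∑_{n=0}^∞ a(n)rⁿ ≠ 0 (this series converges absolutely since |r| = β < α). Then, with c(n) := ∑_{k=0}^{n} a(k)·b(n−k), one has c(n)/b(n) → A(r) as n → ∞, i.e. c(n) ∼ A(r)·b(n). -/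
open Filter Topology Finset

/-!
Write `c(n)/b(n) = ∑_{k ≤ n} a(k) · (b(n-k)/b(n))`; for fixed `k` the ratio `b(n-k)/b(n)` tends
to `rᵏ`. The ratio test gives `|r| ≤ β < α`, so pick `ρ ∈ (|r|, α)`. Then `m ↦ |b m| ρᵐ` is
eventually nondecreasing, which bounds `|b(n-k)/b(n)|` by `K ρᵏ` uniformly in `k ≤ n`, and since
`∑ |a k| ρᵏ < ∞`, Tannery's theorem lets the limit pass inside the sum.
-/

theorem tendsto_sum_range_succ_of_dominated {E : Type*} [NormedAddCommGroup E] [CompleteSpace E]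
    {f : ℕ → ℕ → E} {g : ℕ → E} {bound : ℕ → ℝ} (h_sum : Summable bound)
    (hfg : ∀ k, Tendsto (f · k) atTop (𝓝 (g k)))
    (h_bound : ∀ᶠ n in atTop, ∀ k ≤ n, ‖f n k‖ ≤ bound k) :
    Tendsto (fun n ↦ ∑ k ∈ range (n + 1), f n k) atTop (𝓝 (∑' k, g k)) := by
  set F : ℕ → ℕ → E := fun n k ↦ if k ≤ n then f n k else 0
  have hF : ∀ n, ∑' k, F n k = ∑ k ∈ range (n + 1), f n k := fun n ↦ by
    rw [tsum_eq_sum (s := range (n + 1)) fun k hk ↦ if_neg (by simpa [Nat.lt_succ_iff] using hk)]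
    exact sum_congr rfl fun k hk ↦ if_pos (by simpa [Nat.lt_succ_iff] using hk)
  simp only [← hF]
  refine tendsto_tsum_of_dominated_convergence h_sum.abs (fun k ↦ (hfg k).congr' ?_) ?_
  · filter_upwards [eventually_ge_atTop k] with n hn
    simp [F, hn]
  · filter_upwards [h_bound] with n hn k
    by_cases hk : k ≤ n
    · simpa [F, hk] using (hn k hk).trans (le_abs_self _)
    · simp [F, hk]

theorem exists_eventually_le_mul_of_eventually_le_succ {g : ℕ → ℝ}
    (hmono : ∀ᶠ n in atTop, g n ≤ g (n + 1)) (hpos : ∀ᶠ n in atTop, 0 < g n) :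
    ∃ K, ∀ᶠ n in atTop, ∀ m ≤ n, g m ≤ K * g n := by
  obtain ⟨N, hN⟩ := eventually_atTop.1 (hmono.and hpos)
  have hmonoOn : ∀ ⦃m n⦄, N ≤ m → m ≤ n → g m ≤ g n :=
    Nat.rel_of_forall_rel_succ_of_le_of_le (· ≤ ·) fun k hk ↦ (hN k hk).1
  set G := ∑ m ∈ range (N + 1), |g m|
  have hG : ∀ m ≤ N, g m ≤ G := fun m hm ↦ (le_abs_self _).trans <|
    single_le_sum (f := fun m ↦ |g m|) (fun _ _ ↦ abs_nonneg _) (mem_range.2 (Nat.lt_succ_of_le hm))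
  have hgN := (hN N le_rfl).2
  have hK : 1 ≤ G / g N := (one_le_div hgN).2 (hG N le_rfl)
  refine ⟨G / g N, eventually_atTop.2 ⟨N, fun n hn m hm ↦ ?_⟩⟩
  have hgn : g N ≤ g n := hmonoOn le_rfl hn
  rcases le_or_gt N m with hNm | hmN
  · exact (hmonoOn hNm hm).trans (le_mul_of_one_le_left (hgN.le.trans hgn) hK)
  · calc g m ≤ G := hG m hmN.le
      _ = G / g N * g N := (div_mul_cancel₀ G hgN.ne').symm
      _ ≤ G / g N * g n := by gcongr

section RatioOfConsecutiveTerms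

variable {𝕜 : Type*} [NormedField 𝕜] {b : ℕ → 𝕜} {r : 𝕜}

theorem tendsto_div_sub_of_tendsto_ratio (hbne : ∀ᶠ n in atTop, b n ≠ 0)
    (hr : Tendsto (fun n ↦ b (n - 1) / b n) atTop (𝓝 r)) (k : ℕ) :
    Tendsto (fun n ↦ b (n - k) / b n) atTop (𝓝 (r ^ k)) := by
  induction k with
  | zero =>
    refine tendsto_const_nhds.congr' ?_
    filter_upwards [hbne] with n hn
    simp [hn]
  | succ k ih =>
    have hshift := (hr.comp (tendsto_sub_atTop_nat k)).mul ih
    rw [← pow_succ'] at hshift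
    refine hshift.congr' ?_
    filter_upwards [(tendsto_sub_atTop_nat k).eventually hbne] with n hn
    simp [div_mul_div_cancel₀ hn, Nat.sub_sub]

theorem summable_mul_pow_of_tendsto_ratio [CompleteSpace 𝕜] (hbne : ∀ᶠ n in atTop, b n ≠ 0)
    (hr : Tendsto (fun n ↦ b n / b (n + 1)) atTop (𝓝 r)) {x : 𝕜} (hx : ‖x‖ < ‖r‖) :
    Summable fun n ↦ b n * x ^ n := by
  rcases eq_or_ne x 0 with rfl | hx0
  · exact summable_of_ne_finset_zero (s := {0}) fun n hn ↦ by simp_all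
  have hr0 : 0 < ‖r‖ := (norm_nonneg x).trans_lt hx
  refine summable_of_ratio_test_tendsto_lt_one ((inv_mul_lt_one₀ hr0).2 hx)
    (hbne.mono fun n hn ↦ mul_ne_zero hn (pow_ne_zero n hx0))
    (((hr.norm.inv₀ hr0.ne').mul_const ‖x‖).congr' ?_)
  filter_upwards [hbne] with n hn
  simp only [norm_mul, norm_pow, norm_div, inv_div, pow_succ]
  field_simp

theorem exists_eventually_norm_div_le_of_tendsto_ratio (hbne : ∀ᶠ n in atTop, b n ≠ 0)
    (hr : Tendsto (fun n ↦ b n / b (n + 1)) atTop (𝓝 r)) {ρ : ℝ} (hρ : ‖r‖ < ρ) :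
    ∃ K, ∀ᶠ n in atTop, ∀ k ≤ n, ‖b (n - k) / b n‖ ≤ K * ρ ^ k := by
  have hρ0 : 0 < ρ := (norm_nonneg r).trans_lt hρ
  have hmono : ∀ᶠ m in atTop, ‖b m‖ * ρ ^ m ≤ ‖b (m + 1)‖ * ρ ^ (m + 1) := by
    filter_upwards [hr.norm.eventually_le_const hρ, (tendsto_add_atTop_nat 1).eventually hbne]
      with m hm hm1
    rw [norm_div, div_le_iff₀ (norm_pos_iff.2 hm1)] at hm
    calc ‖b m‖ * ρ ^ m ≤ ρ * ‖b (m + 1)‖ * ρ ^ m := by gcongr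
      _ = ‖b (m + 1)‖ * ρ ^ (m + 1) := by ring
  have hpos : ∀ᶠ m in atTop, 0 < ‖b m‖ * ρ ^ m := hbne.mono fun m hm ↦ by positivity
  obtain ⟨K, hK⟩ := exists_eventually_le_mul_of_eventually_le_succ hmono hpos
  refine ⟨K, ?_⟩
  filter_upwards [hK, hbne] with n hn hbn k hk
  have := hn (n - k) (Nat.sub_le n k)
  rw [← Nat.sub_add_cancel hk, pow_add, ← mul_assoc, Nat.sub_add_cancel hk] at this
  rw [norm_div, div_le_iff₀ (norm_pos_iff.2 hbn)]
  nlinarith [pow_pos hρ0 (n - k)]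

end RatioOfConsecutiveTerms

theorem benders_lemma_general
    (a b : ℕ → ℝ) (α β r : ℝ) (hβ : 0 ≤ β) (hαβ : β < α)
    (ha_conv : ∀ x : ℝ, |x| < α → Summable (fun n : ℕ => a n * x ^ n))
    (hb_div : ∀ x : ℝ, β < |x| → ¬ Summable (fun n : ℕ => b n * x ^ n))
    (hbne : ∀ᶠ n in atTop, b n ≠ 0)
    (hr : Tendsto (fun n : ℕ => b (n - 1) / b n) atTop (nhds r)) :
    Tendsto (fun n : ℕ => (∑ k ∈ Finset.range (n + 1), a k * b (n - k)) / b n)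
      atTop (nhds (∑' n : ℕ, a n * r ^ n)) := by
  have hr' : Tendsto (fun n ↦ b n / b (n + 1)) atTop (𝓝 r) := by
    simpa [Function.comp_def] using hr.comp (tendsto_add_atTop_nat 1)
  have hrβ : |r| ≤ β := by
    by_contra! hβr
    obtain ⟨x, hβx, hxr⟩ := exists_between hβr
    have hx : ‖x‖ < ‖r‖ := by
      rwa [Real.norm_eq_abs, Real.norm_eq_abs, abs_of_nonneg (hβ.trans hβx.le)]
    exact hb_div x (hβx.trans_le (le_abs_self x)) (summable_mul_pow_of_tendsto_ratio hbne hr' hx)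
  obtain ⟨ρ, hrρ, hρα⟩ := exists_between (hrβ.trans_lt hαβ)
  have hρ : 0 < ρ := (abs_nonneg r).trans_lt hrρ
  obtain ⟨K, hK⟩ := exists_eventually_norm_div_le_of_tendsto_ratio hbne hr' hrρ
  have ha_abs : Summable fun k ↦ |a k * ρ ^ k| := (ha_conv ρ (by rwa [abs_of_pos hρ])).abs
  refine (tendsto_sum_range_succ_of_dominated (f := fun n k ↦ a k * (b (n - k) / b n))
    (ha_abs.mul_left K) (fun k ↦ (tendsto_div_sub_of_tendsto_ratio hbne hr k).const_mul (a k))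
    ?_).congr fun n ↦ ?_
  · filter_upwards [hK] with n hn k hk
    calc ‖a k * (b (n - k) / b n)‖ = |a k| * ‖b (n - k) / b n‖ := norm_mul _ _
      _ ≤ |a k| * (K * ρ ^ k) := by gcongr; exact hn k hk
      _ = K * |a k * ρ ^ k| := by rw [abs_mul, abs_of_pos (pow_pos hρ k)]; ring
  · simp only [sum_div, mul_div_assoc]

/-- Bender's lemma: if `∑ a(n)xⁿ` has radius of convergence `α`,
`∑ b(n)xⁿ` has radius of convergence `β`, with `α > β ≥ 0`, `b(n) ≠ 0` eventually,
`b(n−1)/b(n) → r`, and `A(r) = ∑ a(n)rⁿ ≠ 0`, then with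
`c(n) = ∑_{k=0}^n a(k)b(n−k)` one has `c(n)/b(n) → A(r)`, i.e. `c(n) ∼ A(r)·b(n)`. -/
theorem benders_lemma
    (a b : ℕ → ℝ) (α β r : ℝ) (hβ : 0 ≤ β) (hαβ : β < α)
    (ha_conv : ∀ x : ℝ, |x| < α → Summable (fun n : ℕ => a n * x ^ n))
    (ha_div : ∀ x : ℝ, α < |x| → ¬ Summable (fun n : ℕ => a n * x ^ n))
    (hb_conv : ∀ x : ℝ, |x| < β → Summable (fun n : ℕ => b n * x ^ n))
    (hb_div : ∀ x : ℝ, β < |x| → ¬ Summable (fun n : ℕ => b n * x ^ n))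
    (hbne : ∀ᶠ n in atTop, b n ≠ 0)
    (hr : Tendsto (fun n : ℕ => b (n - 1) / b n) atTop (nhds r))
    (hA : (∑' n : ℕ, a n * r ^ n) ≠ 0) :
    Tendsto (fun n : ℕ => (∑ k ∈ Finset.range (n + 1), a k * b (n - k)) / b n)
      atTop (nhds (∑' n : ℕ, a n * r ^ n)) :=
  benders_lemma_general a b α β r hβ hαβ ha_conv hb_div hbne hr
end

section
/- Let M ∈ ℝ⟦X⟧ be the formal power series M = ∑_{n≥1} m(n)Xⁿ. For all formal power series R, V ∈ ℝ⟦X⟧ satisfying V = R + X·V + 2·X·V·M, one has (1 − 2X − 3X²)·V² = R². (Equivalently, V = R/√(1 − 2X − 3X²): the generating function for the number of vertices over all Motzkin trees whose subtree has a given property equals the generating function R for the number of Motzkin trees whose root has that property divided by √(1 − 2x − 3x²).) -/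
/-!
The generating function `M` of the Motzkin numbers satisfies `M = X + X M + X M²`. The relation
`V = R + X V + 2 X V M` says `R = V (1 - X - 2 X M)`, and squaring, the quadratic equation for `M`
eliminates `M`: `(1 - X - 2 X M)² = 1 - 2X - 3X²` modulo `4X (M - X - X M - X M²)`.
-/

open PowerSeries

lemma PowerSeries.coeff_succ_mk_sq_of_apply_zero {K : Type*} [CommSemiring K] {f : ℕ → K}
    (hf0 : f 0 = 0) (n : ℕ) :
    coeff (n + 1) (mk f ^ 2) = ∑ i ∈ Finset.Icc 1 n, f i * f (n + 1 - i) := by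
  rw [sq, coeff_mul, Finset.Nat.sum_antidiagonal_eq_sum_range_succ_mk]
  simp only [coeff_mk]
  refine (Finset.sum_subset (fun i hi => ?_) fun i hi hni => ?_).symm
  · simp only [Finset.mem_Icc, Finset.mem_range] at hi ⊢
    omega
  · simp only [Finset.mem_range, Finset.mem_Icc, not_and, not_le] at hi hni
    obtain rfl | rfl : i = 0 ∨ i = n + 1 := by omega
    all_goals simp [hf0]

lemma motzkin_gf_eq {K : Type*} [CommSemiring K] {m : ℕ → ℕ} (hm0 : m 0 = 0) (hm1 : m 1 = 1)
    (hm : ∀ n, 2 ≤ n →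
      m n = m (n - 1) + ∑ i ∈ Finset.Icc 1 (n - 2), m i * m (n - 1 - i)) :
    mk (fun n => (m n : K)) =
      X + X * mk (fun n => (m n : K)) + X * mk (fun n => (m n : K)) ^ 2 := by
  ext (_ | _ | n)
  · simp [hm0]
  · simp [hm0, hm1, coeff_succ_X_mul]
  · rw [map_add, map_add, coeff_X, if_neg (by omega), coeff_succ_X_mul, coeff_succ_X_mul,
      coeff_succ_mk_sq_of_apply_zero (by simp [hm0]), coeff_mk, coeff_mk, hm (n + 2) le_add_self]
    push_cast
    simp

theorem sq_mul_eq_sq_of_motzkin_eq {A : Type*} [CommRing A] {x M R V : A}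
    (hM : M = x + x * M + x * M ^ 2) (hV : V = R + x * V + 2 * x * V * M) :
    (1 - 2 * x - 3 * x ^ 2) * V ^ 2 = R ^ 2 := by
  have hR : R = V * (1 - x - 2 * x * M) := by linear_combination -hV
  linear_combination 4 * x * V ^ 2 * hM - (R + V * (1 - x - 2 * x * M)) * hR

/-- Let `M = ∑_{n≥1} m(n)Xⁿ ∈ ℝ⟦X⟧` be the Motzkin generating function.
For all formal power series `R, V` with `V = R + X·V + 2·X·V·M`, one has
`(1 − 2X − 3X²)·V² = R²` (i.e. `V = R/√(1 − 2X − 3X²)`). -/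
theorem motzkin_subtree_gf_relation
    (m : ℕ → ℕ) (hm0 : m 0 = 0) (hm1 : m 1 = 1)
    (hm : ∀ n, 2 ≤ n →
      m n = m (n - 1) + ∑ i ∈ Finset.Icc 1 (n - 2), m i * m (n - 1 - i))
    (R V : PowerSeries ℝ)
    (hV : V = R + PowerSeries.X * V
        + 2 * PowerSeries.X * V * PowerSeries.mk (fun n => (m n : ℝ))) :
    (1 - 2 * PowerSeries.X - 3 * PowerSeries.X ^ 2) * V ^ 2 = R ^ 2 :=
  sq_mul_eq_sq_of_motzkin_eq (motzkin_gf_eq hm0 hm1 hm) hV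
end

section
/- Fix an integer k ≥ 1. Define v : ℕ → ℝ by v(0) = 0 and, for n ≥ 1, v(n) = m(k)·[n = k] + v(n−1) + 2·∑_{i=1}^{n−2} v(i)·m(n−1−i), so that v(n) is the total number of vertices having exactly k vertices in their subtree, summed over all Motzkin trees with n vertices. Then v(n)/(n·m(n)) → m(k)/3ᵏ as n → ∞; that is, the probability that a uniformly random vertex of a uniformly random Motzkin tree with n vertices has exactly k vertices in its subtree tends to m(k)/3ᵏ. -/
/-!
With `M = ∑ m(n) xⁿ` and `V = ∑ v(n) xⁿ`, the recurrences say `M = x + xM + xM²` and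
`V = m(k) xᵏ + xV + 2xVM`, so `V = m(k) xᵏ T` with `T = 1 / (1 - x - 2xM)`.
Differentiating the functional equation shows that `T(n) = 1 + 2 ∑_{j<n} j m(j)`, so that
`T(n+1) - T(n) = 2 n m(n)`. Since `(1 - x - 2xM)² = (1 - 3x)(1 + x)`, the series `T` satisfies
`(1 - 2x - 3x²) T' = (1 + 3x) T`, a recurrence that traps `T(n+1)/T(n)` between
`3 - 2/(n+1)` and `3`. Hence
`v(n) / (n m(n)) = m(k) · (T(n-k) / T(n)) / (n m(n) / T(n)) → m(k) · 3⁻ᵏ / 1`.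
-/

open Filter Topology PowerSeries Finset

namespace Motzkin

theorem coeff_X_mul_mk_mul_mk {R : Type*} [CommSemiring R] {a b : ℕ → R}
    (ha : a 0 = 0) (hb : b 0 = 0) (n : ℕ) :
    coeff n (X * (PowerSeries.mk a * PowerSeries.mk b)) =
      ∑ i ∈ Icc 1 (n - 2), a i * b (n - 1 - i) := by
  rcases n with _ | s
  · simp
  rw [coeff_succ_X_mul, coeff_mul, Nat.sum_antidiagonal_eq_sum_range_succ_mk]
  simp only [coeff_mk, Nat.add_sub_cancel]
  refine (sum_subset (fun i hi => ?_) fun i hi hi' => ?_).symm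
  · simp only [mem_Icc, mem_range] at hi ⊢
    omega
  · simp only [mem_Icc, mem_range, not_and_or, not_le] at hi hi'
    obtain rfl | rfl : i = 0 ∨ i = s := by omega
    · simp [ha]
    · simp [hb]

theorem coeff_X_mul_derivative {R : Type*} [CommSemiring R] (f : R⟦X⟧) (n : ℕ) :
    coeff n (X * d⁄dX R f) = n * coeff n f := by
  rcases n with _ | n
  · simp
  rw [coeff_succ_X_mul, coeff_derivative, mul_comm]
  push_cast
  rfl

noncomputable def ogf (m : ℕ → ℕ) : ℝ⟦X⟧ := PowerSeries.mk fun n => (m n : ℝ)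

@[simp] theorem coeff_ogf (m : ℕ → ℕ) (n : ℕ) : coeff n (ogf m) = m n := coeff_mk _ _

/-- For the Motzkin sequence, `partialVertexSum m` is the coefficient sequence of
`1 / (1 - x - 2x M)` (`mk_partialVertexSum_mul`). -/
noncomputable def partialVertexSum (m : ℕ → ℕ) (n : ℕ) : ℝ :=
  1 + 2 * ∑ j ∈ range n, (j : ℝ) * m j

theorem partialVertexSum_succ (m : ℕ → ℕ) (n : ℕ) :
    partialVertexSum m (n + 1) = partialVertexSum m n + 2 * (n * m n) := by
  simp only [partialVertexSum, sum_range_succ]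
  ring

theorem one_le_partialVertexSum (m : ℕ → ℕ) (n : ℕ) : 1 ≤ partialVertexSum m n := by
  have : 0 ≤ ∑ j ∈ range n, (j : ℝ) * m j := sum_nonneg fun j _ => by positivity
  unfold partialVertexSum
  linarith

theorem one_sub_X_mul_mk_partialVertexSum (m : ℕ → ℕ) :
    (1 - X) * PowerSeries.mk (partialVertexSum m) = 1 + 2 * X * (X * d⁄dX ℝ (ogf m)) := by
  ext n
  rcases n with _ | n
  · simp [partialVertexSum]
  rw [sub_mul, one_mul, map_sub, coeff_succ_X_mul, map_add, mul_assoc, ← map_ofNat C 2,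
    coeff_C_mul, coeff_succ_X_mul, coeff_X_mul_derivative, coeff_mk, coeff_mk, coeff_one,
    partialVertexSum_succ, coeff_ogf]
  simp

section GeneratingFunction

variable {m : ℕ → ℕ} (hm0 : m 0 = 0) (hm1 : m 1 = 1)
  (hm : ∀ n, 2 ≤ n → m n = m (n - 1) + ∑ i ∈ Icc 1 (n - 2), m i * m (n - 1 - i))
include hm0 hm1 hm

theorem ogf_eq : ogf m = X + X * ogf m + X * (ogf m * ogf m) := by
  ext n
  rw [map_add, map_add, ogf, coeff_X_mul_mk_mul_mk (by simp [hm0]) (by simp [hm0])]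
  rcases n with _ | _ | n
  · simp [hm0]
  · simp [hm0, hm1]
  · rw [coeff_succ_X_mul, coeff_X, if_neg (by omega), coeff_mk, coeff_mk, hm _ (by omega)]
    push_cast
    simp

theorem derivative_ogf_mul :
    d⁄dX ℝ (ogf m) * (1 - X - 2 * X * ogf m) = 1 + ogf m + ogf m * ogf m := by
  have h := congrArg (d⁄dX ℝ) (ogf_eq hm0 hm1 hm)
  simp only [map_add, Derivation.leibniz, derivative_X, smul_eq_mul] at h
  linear_combination h

theorem mk_partialVertexSum_mul :
    PowerSeries.mk (partialVertexSum m) * (1 - X - 2 * X * ogf m) = 1 := by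
  refine mul_left_cancel₀ (a := 1 - X) (fun h => by simpa using congrArg (coeff 0) h) ?_
  rw [← mul_assoc, one_sub_X_mul_mk_partialVertexSum]
  linear_combination (2 * X * X) * derivative_ogf_mul hm0 hm1 hm - 2 * X * ogf_eq hm0 hm1 hm

theorem derivative_mk_partialVertexSum :
    (1 - 2 * X - 3 * X ^ 2) * d⁄dX ℝ (PowerSeries.mk (partialVertexSum m)) =
      (1 + 3 * X) * PowerSeries.mk (partialVertexSum m) := by
  set T := PowerSeries.mk (partialVertexSum m)
  set U : ℝ⟦X⟧ := 1 - X - 2 * X * ogf m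
  have hTU : T * U = 1 := mk_partialVertexSum_mul hm0 hm1 hm
  have hU : U * U = 1 - 2 * X - 3 * X ^ 2 := by
    linear_combination (-4 * X) * ogf_eq hm0 hm1 hm
  have hconst (n : ℕ) [n.AtLeastTwo] : d⁄dX ℝ (OfNat.ofNat n : ℝ⟦X⟧) = 0 :=
    Derivation.map_natCast _ n
  have hdTU := congrArg (d⁄dX ℝ) hTU
  have hdU := congrArg (d⁄dX ℝ) hU
  simp only [Derivation.leibniz, derivative_one, smul_eq_mul, map_sub, derivative_X,
    Derivation.leibniz_pow, hconst] at hdTU hdU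
  have hUdU : U * d⁄dX ℝ U = -1 - 3 * X :=
    mul_left_cancel₀ (a := 2) (fun h => by simpa [map_ofNat] using congrArg (coeff 0) h)
      (by linear_combination hdU)
  linear_combination U * hdTU - T * hUdU - d⁄dX ℝ T * hU

theorem partialVertexSum_recurrence (s : ℕ) :
    ((s : ℝ) + 2) * partialVertexSum m (s + 2) =
      (2 * s + 3) * partialVertexSum m (s + 1) +
        3 * ((s : ℝ) + 1) * partialVertexSum m s := by
  set T := PowerSeries.mk (partialVertexSum m)
  have h : d⁄dX ℝ T =
      2 * (X * d⁄dX ℝ T) + 3 * (X * (X * d⁄dX ℝ T)) + T + 3 * (X * T) := by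
    linear_combination derivative_mk_partialVertexSum hm0 hm1 hm
  have hcoeff := congrArg (coeff (s + 1)) h
  simp only [map_add, ← map_ofNat C, coeff_C_mul, coeff_succ_X_mul, coeff_X_mul_derivative,
    coeff_derivative, coeff_mk, T] at hcoeff
  push_cast at hcoeff
  linear_combination hcoeff

theorem eq_mul_partialVertexSum_of_recurrence {k : ℕ} {v : ℕ → ℝ} (hv0 : v 0 = 0)
    (hv : ∀ n, 1 ≤ n → v n = (if n = k then (m k : ℝ) else 0) + v (n - 1)
        + 2 * ∑ i ∈ Icc 1 (n - 2), v i * (m (n - 1 - i) : ℝ))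
    {n : ℕ} (hn : k ≤ n) : v n = m k * partialVertexSum m (n - k) := by
  have hV : PowerSeries.mk v * (1 - X - 2 * X * ogf m) = C (m k : ℝ) * X ^ k := by
    suffices PowerSeries.mk v =
        C (m k : ℝ) * X ^ k + X * PowerSeries.mk v + 2 * (X * (PowerSeries.mk v * ogf m)) by
      linear_combination this
    ext j
    rw [map_add, map_add, coeff_C_mul_X_pow, ← map_ofNat C 2, coeff_C_mul, ogf,
      coeff_X_mul_mk_mul_mk hv0 (by simp [hm0]), coeff_mk]
    rcases j with _ | j
    · rcases k with _ | k <;> simp [hv0, hm0]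
    · rw [coeff_succ_X_mul, coeff_mk, hv _ (by omega)]
      simp
  have hVT : PowerSeries.mk v = C (m k : ℝ) * X ^ k * PowerSeries.mk (partialVertexSum m) := by
    rw [← hV, mul_assoc, mul_comm (1 - X - _), mk_partialVertexSum_mul hm0 hm1 hm, mul_one]
  have h := congrArg (coeff n) hVT
  rwa [coeff_mk, mul_assoc, coeff_C_mul, coeff_X_pow_mul', if_pos hn, coeff_mk] at h

end GeneratingFunction

section Ratio

variable {t : ℕ → ℝ}

theorem ratio_bounds_of_recurrence (hpos : ∀ n, 0 < t n) (h01 : t 0 ≤ t 1)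
    (h10 : t 1 ≤ 3 * t 0)
    (hrec : ∀ s : ℕ,
      ((s : ℝ) + 2) * t (s + 2) = (2 * s + 3) * t (s + 1) + 3 * ((s : ℝ) + 1) * t s)
    (n : ℕ) : t (n + 1) ≤ 3 * t n ∧ (3 * n + 1) * t n ≤ (n + 1) * t (n + 1) := by
  induction n with
  | zero => simpa using ⟨h10, h01⟩
  | succ n ih =>
    obtain ⟨hup, hlow⟩ := ih
    have hr := hrec n
    have hn : (0 : ℝ) ≤ n := n.cast_nonneg
    have := hpos n
    have := hpos (n + 1)
    push_cast
    constructor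
    · nlinarith
    · nlinarith

theorem tendsto_ratio_of_recurrence (hpos : ∀ n, 0 < t n) (h01 : t 0 ≤ t 1)
    (h10 : t 1 ≤ 3 * t 0)
    (hrec : ∀ s : ℕ,
      ((s : ℝ) + 2) * t (s + 2) = (2 * s + 3) * t (s + 1) + 3 * ((s : ℝ) + 1) * t s) :
    Tendsto (fun n => t (n + 1) / t n) atTop (𝓝 3) := by
  have hlower : Tendsto (fun n : ℕ => 3 - 2 * (1 / ((n : ℝ) + 1))) atTop (𝓝 3) := by
    simpa using (tendsto_one_div_add_atTop_nhds_zero_nat.const_mul 2).const_sub (3 : ℝ)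
  refine tendsto_of_tendsto_of_tendsto_of_le_of_le hlower tendsto_const_nhds (fun n => ?_)
    (fun n => ?_)
  · obtain ⟨-, hlow⟩ := ratio_bounds_of_recurrence hpos h01 h10 hrec n
    have : 3 - 2 * (1 / ((n : ℝ) + 1)) = (3 * n + 1) / (n + 1) := by field_simp; ring
    simp only [this]
    rw [div_le_div_iff₀ (by positivity) (hpos n)]
    linarith
  · obtain ⟨hup, -⟩ := ratio_bounds_of_recurrence hpos h01 h10 hrec n
    exact (div_le_iff₀ (hpos n)).2 hup

theorem tendsto_add_div_of_tendsto_ratio {r : ℝ} (ht : ∀ n, t n ≠ 0)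
    (h : Tendsto (fun n => t (n + 1) / t n) atTop (𝓝 r)) (j : ℕ) :
    Tendsto (fun n => t (n + j) / t n) atTop (𝓝 (r ^ j)) := by
  induction j with
  | zero => simp [div_self (ht _)]
  | succ j ih =>
    rw [pow_succ']
    refine ((h.comp (tendsto_add_atTop_nat j)).mul ih).congr fun n => ?_
    simp only [Function.comp_apply, ← add_assoc, div_mul_div_cancel₀ (ht _)]

theorem tendsto_sub_div_of_tendsto_ratio {r : ℝ} (ht : ∀ n, t n ≠ 0) (hr : r ≠ 0)
    (h : Tendsto (fun n => t (n + 1) / t n) atTop (𝓝 r)) (j : ℕ) :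
    Tendsto (fun n => t (n - j) / t n) atTop (𝓝 (r⁻¹ ^ j)) := by
  rw [inv_pow]
  refine (((tendsto_add_div_of_tendsto_ratio ht h j).inv₀ (pow_ne_zero j hr)).comp
    (tendsto_sub_atTop_nat j)).congr' ?_
  filter_upwards [eventually_ge_atTop j] with n hn
  simp [Nat.sub_add_cancel hn]

end Ratio

end Motzkin

open Motzkin in
theorem motzkin_prob_k_vertices_in_subtree_general
    (m : ℕ → ℕ) (hm0 : m 0 = 0) (hm1 : m 1 = 1)
    (hm : ∀ n, 2 ≤ n →
      m n = m (n - 1) + ∑ i ∈ Finset.Icc 1 (n - 2), m i * m (n - 1 - i))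
    (k : ℕ)
    (v : ℕ → ℝ) (hv0 : v 0 = 0)
    (hv : ∀ n, 1 ≤ n →
      v n = (if n = k then (m k : ℝ) else 0) + v (n - 1)
        + 2 * ∑ i ∈ Finset.Icc 1 (n - 2), v i * (m (n - 1 - i) : ℝ)) :
    Tendsto (fun n : ℕ => v n / (n * (m n : ℝ))) atTop
      (nhds ((m k : ℝ) / 3 ^ k)) := by
  set T := partialVertexSum m
  have hTpos (n : ℕ) : 0 < T n := one_pos.trans_le (one_le_partialVertexSum m n)
  have hratio : Tendsto (fun n => T (n + 1) / T n) atTop (𝓝 3) :=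
    tendsto_ratio_of_recurrence hTpos (by norm_num [T, partialVertexSum])
      (by norm_num [T, partialVertexSum]) (partialVertexSum_recurrence hm0 hm1 hm)
  have hshift : Tendsto (fun n => T (n - k) / T n) atTop (𝓝 ((3 : ℝ)⁻¹ ^ k)) :=
    tendsto_sub_div_of_tendsto_ratio (fun n => (hTpos n).ne') three_ne_zero hratio k
  have hsize : Tendsto (fun n : ℕ => n * (m n : ℝ) / T n) atTop (𝓝 1) := by
    have h := (hratio.sub_const 1).div_const 2
    rw [show ((3 : ℝ) - 1) / 2 = 1 by norm_num] at h
    refine h.congr fun n => ?_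
    rw [show T (n + 1) = T n + 2 * (n * m n) from partialVertexSum_succ m n]
    field_simp [(hTpos n).ne']
    ring
  have hlim := (hshift.const_mul (m k : ℝ)).div hsize one_ne_zero
  rw [div_one, inv_pow, ← div_eq_mul_inv] at hlim
  refine hlim.congr' ?_
  filter_upwards [eventually_ge_atTop k] with n hn
  rw [Pi.div_apply, eq_mul_partialVertexSum_of_recurrence hm0 hm1 hm hv0 hv hn, ← mul_div_assoc,
    div_div_div_cancel_right₀ (hTpos n).ne']

/-- Fix `k ≥ 1`. With `m` the Motzkin sequence and `v(n)` the total number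
of vertices having exactly `k` vertices in their subtree over all Motzkin trees with `n`
vertices (defined by `v(0) = 0` and, for `n ≥ 1`,
`v(n) = m(k)·[n = k] + v(n−1) + 2·∑_{i=1}^{n−2} v(i)·m(n−1−i)`), one has
`v(n)/(n·m(n)) → m(k)/3ᵏ` as `n → ∞`. -/
theorem motzkin_prob_k_vertices_in_subtree
    (m : ℕ → ℕ) (hm0 : m 0 = 0) (hm1 : m 1 = 1)
    (hm : ∀ n, 2 ≤ n →
      m n = m (n - 1) + ∑ i ∈ Finset.Icc 1 (n - 2), m i * m (n - 1 - i))
    (k : ℕ) (hk : 1 ≤ k)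
    (v : ℕ → ℝ) (hv0 : v 0 = 0)
    (hv : ∀ n, 1 ≤ n →
      v n = (if n = k then (m k : ℝ) else 0) + v (n - 1)
        + 2 * ∑ i ∈ Finset.Icc 1 (n - 2), v i * (m (n - 1 - i) : ℝ)) :
    Tendsto (fun n : ℕ => v n / (n * (m n : ℝ))) atTop
      (nhds ((m k : ℝ) / 3 ^ k)) :=
  motzkin_prob_k_vertices_in_subtree_general m hm0 hm1 hm k v hv0 hv
end

section
/- Let x, y be real numbers with 0 < x < 1, 0 < y ≤ 1, and 4x²y < (1 − x)². Then ∑_{k=1}^∞ catalan(k−1)·x^{2k−1}·yᵏ/(1 − x)^{2k−1} converges and equals ((1 − x) − √((1 − x)² − 4x²y))/(2x). (Equivalently, the generating function R′_k(x) for the number of Motzkin trees with k leaves, counted by vertices, is catalan(k−1)·x^{2k−1}/(1 − x)^{2k−1}.) -/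
/-! The series is `x y / (1 - x) · C(t)` with `t = x² y / (1 - x)²` and `C(t) = ∑ catalan j · tʲ`.
Through the Catalan recurrence, the partial sums of `C(t)` stay below the smaller root
`m = (1 - √(1 - 4t)) / (2t)` of `1 + t m² = m`, so `C(t)` converges; by the Cauchy product its sum
solves the same quadratic, and being at most `m` it equals `m`. -/

open Finset

theorem sum_range_sum_antidiagonal_le_sq {R : Type*} [CommSemiring R] [PartialOrder R]
    [IsOrderedRing R] {f : ℕ → R} (hf : ∀ i, 0 ≤ f i) (n : ℕ) :
    ∑ j ∈ range n, ∑ p ∈ antidiagonal j, f p.1 * f p.2 ≤ (∑ i ∈ range n, f i) ^ 2 := by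
  classical
  have hinj : Set.InjOn Sigma.snd ((range n).sigma antidiagonal : Set (Σ _ : ℕ, ℕ × ℕ)) := by
    rintro ⟨j, p⟩ hp ⟨j', p'⟩ hp' (rfl : p = p')
    simp only [mem_coe, mem_sigma, HasAntidiagonal.mem_antidiagonal] at hp hp'
    cases hp.2.symm.trans hp'.2
    rfl
  have hsub : ((range n).sigma antidiagonal).image Sigma.snd ⊆ range n ×ˢ range n := by
    intro p hp
    obtain ⟨⟨j, q⟩, hq, rfl⟩ := mem_image.1 hp
    simp only [mem_sigma, mem_range, HasAntidiagonal.mem_antidiagonal] at hq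
    simp only [mem_product, mem_range]
    omega
  calc ∑ j ∈ range n, ∑ p ∈ antidiagonal j, f p.1 * f p.2
      = ∑ p ∈ ((range n).sigma antidiagonal).image Sigma.snd, f p.1 * f p.2 := by
        rw [sum_image hinj, sum_sigma]
    _ ≤ ∑ p ∈ range n ×ˢ range n, f p.1 * f p.2 :=
        sum_le_sum_of_subset_of_nonneg hsub fun p _ _ => mul_nonneg (hf _) (hf _)
    _ = (∑ i ∈ range n, f i) ^ 2 := by rw [sum_product, sq, sum_mul_sum]

theorem catalan_mul_pow_succ {R : Type*} [CommSemiring R] (t : R) (n : ℕ) :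
    (catalan (n + 1) : R) * t ^ (n + 1) =
      t * ∑ p ∈ antidiagonal n, (catalan p.1 * t ^ p.1) * (catalan p.2 * t ^ p.2) := by
  rw [catalan_succ', Nat.cast_sum, sum_mul, mul_sum]
  refine sum_congr rfl fun p hp => ?_
  rw [← HasAntidiagonal.mem_antidiagonal.1 hp]
  push_cast
  ring

theorem sum_range_catalan_mul_pow_le {t m : ℝ} (ht : 0 ≤ t) (hm : 1 + t * m ^ 2 ≤ m) (n : ℕ) :
    ∑ j ∈ range n, (catalan j : ℝ) * t ^ j ≤ m := by
  induction n with
  | zero => simp only [sum_range_zero]; nlinarith [sq_nonneg m]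
  | succ n ih =>
    have hS : 0 ≤ ∑ j ∈ range n, (catalan j : ℝ) * t ^ j := by positivity
    have hconv := sum_range_sum_antidiagonal_le_sq
      (f := fun j => (catalan j : ℝ) * t ^ j) (fun j => by positivity) n
    rw [sum_range_succ']
    simp_rw [catalan_mul_pow_succ, ← mul_sum]
    rw [catalan_zero, Nat.cast_one, pow_zero, one_mul]
    nlinarith [mul_le_mul_of_nonneg_left hconv ht,
      mul_le_mul_of_nonneg_left (pow_le_pow_left₀ hS ih 2) ht]

theorem tsum_catalan_mul_pow_eq {t : ℝ} (hs : Summable fun j => (catalan j : ℝ) * t ^ j) :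
    ∑' j, (catalan j : ℝ) * t ^ j = 1 + t * (∑' j, (catalan j : ℝ) * t ^ j) ^ 2 := by
  have hnorm := hs.norm
  calc ∑' j, (catalan j : ℝ) * t ^ j
      = 1 + ∑' n, (catalan (n + 1) : ℝ) * t ^ (n + 1) := by
        rw [hs.tsum_eq_zero_add, catalan_zero, Nat.cast_one, pow_zero, one_mul]
    _ = 1 + t * ∑' n, ∑ p ∈ antidiagonal n,
          ((catalan p.1 : ℝ) * t ^ p.1) * (catalan p.2 * t ^ p.2) := by
        simp_rw [catalan_mul_pow_succ, tsum_mul_left]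
    _ = 1 + t * (∑' j, (catalan j : ℝ) * t ^ j) ^ 2 := by
        rw [sq, tsum_mul_tsum_eq_tsum_sum_antidiagonal_of_summable_norm hnorm hnorm]

noncomputable def catalanGF (t : ℝ) : ℝ := (1 - √(1 - 4 * t)) / (2 * t)

theorem one_add_mul_catalanGF_sq {t : ℝ} (ht : 0 < t) (ht4 : 4 * t ≤ 1) :
    1 + t * catalanGF t ^ 2 = catalanGF t := by
  have hu := Real.sq_sqrt (sub_nonneg.2 ht4)
  rw [catalanGF]
  set u := √(1 - 4 * t)
  field_simp
  linear_combination hu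

theorem eq_catalanGF_of_eq_one_add_mul_sq {t L : ℝ} (ht : 0 < t) (ht4 : 4 * t ≤ 1)
    (hL : L = 1 + t * L ^ 2) (hLle : L ≤ catalanGF t) : L = catalanGF t := by
  rw [catalanGF] at hLle ⊢
  set u := √(1 - 4 * t)
  have hu0 : 0 ≤ u := Real.sqrt_nonneg _
  have hsq : (2 * t * L - 1) ^ 2 = u ^ 2 := by
    rw [Real.sq_sqrt (sub_nonneg.2 ht4)]
    linear_combination (-4 * t) * hL
  have hle : 2 * t * L - 1 ≤ -u := by
    rw [le_div_iff₀ (by positivity)] at hLle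
    linarith
  have hroot : 2 * t * L - 1 = -u := by
    rcases sq_eq_sq_iff_eq_or_eq_neg.1 hsq with h | h <;> linarith
  rw [eq_div_iff (by positivity)]
  linarith

theorem hasSum_catalan_mul_pow {t : ℝ} (ht : 0 < t) (ht4 : 4 * t ≤ 1) :
    HasSum (fun j => (catalan j : ℝ) * t ^ j) (catalanGF t) := by
  have hbound := sum_range_catalan_mul_pow_le ht.le (one_add_mul_catalanGF_sq ht ht4).le
  have hs := summable_of_sum_range_le (fun j => by positivity) hbound
  convert hs.hasSum
  exact (eq_catalanGF_of_eq_one_add_mul_sq ht ht4 (tsum_catalan_mul_pow_eq hs)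
    (hs.tsum_le_of_sum_range_le hbound)).symm

theorem motzkin_leaves_gf_sum_general
    (x y : ℝ) (hx : 0 < x) (hx1 : x < 1) (hy : 0 < y)
    (hdisc : 4 * x ^ 2 * y < (1 - x) ^ 2) :
    HasSum
      (fun j : ℕ =>
        (catalan j : ℝ) * x ^ (2 * j + 1) * y ^ (j + 1) / (1 - x) ^ (2 * j + 1))
      (((1 - x) - Real.sqrt ((1 - x) ^ 2 - 4 * x ^ 2 * y)) / (2 * x)) := by
  have h1x : 0 < 1 - x := by linarith
  set t := x ^ 2 * y / (1 - x) ^ 2 with ht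
  have ht4 : 4 * t ≤ 1 := by
    rw [ht, ← mul_div_assoc, div_le_one (by positivity)]
    linarith
  have hsqrt : √(1 - 4 * t) = √((1 - x) ^ 2 - 4 * x ^ 2 * y) / (1 - x) := by
    rw [← Real.sqrt_sq h1x.le, ← Real.sqrt_div' _ (sq_nonneg _), Real.sqrt_sq h1x.le]
    congr 1
    rw [ht]
    field_simp
  have hterm : ∀ j : ℕ, (catalan j : ℝ) * x ^ (2 * j + 1) * y ^ (j + 1) / (1 - x) ^ (2 * j + 1)
      = x * y / (1 - x) * (catalan j * t ^ j) := fun j => by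
    rw [ht, div_pow, mul_pow, ← pow_mul, ← pow_mul]
    field_simp
    ring
  have hvalue : ((1 - x) - √((1 - x) ^ 2 - 4 * x ^ 2 * y)) / (2 * x)
      = x * y / (1 - x) * catalanGF t := by
    rw [catalanGF, hsqrt, ht]
    field_simp
  rw [funext hterm, hvalue]
  exact (hasSum_catalan_mul_pow (by positivity) ht4).mul_left _

/-- For real `x, y` with `0 < x < 1`, `0 < y ≤ 1`, and `4x²y < (1 − x)²`,
the series `∑_{k≥1} catalan(k−1)·x^{2k−1}·yᵏ/(1 − x)^{2k−1}` (indexed below by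
`j = k − 1`) converges to `((1 − x) − √((1 − x)² − 4x²y))/(2x)`. -/
theorem motzkin_leaves_gf_sum
    (x y : ℝ) (hx : 0 < x) (hx1 : x < 1) (hy : 0 < y) (hy1 : y ≤ 1)
    (hdisc : 4 * x ^ 2 * y < (1 - x) ^ 2) :
    HasSum
      (fun j : ℕ =>
        (catalan j : ℝ) * x ^ (2 * j + 1) * y ^ (j + 1) / (1 - x) ^ (2 * j + 1))
      (((1 - x) - Real.sqrt ((1 - x) ^ 2 - 4 * x ^ 2 * y)) / (2 * x)) :=
  motzkin_leaves_gf_sum_general x y hx hx1 hy hdisc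
end

section
/- Let T ∈ ℝ⟦X⟧ be the unique formal power series with constant term 0 satisfying T² − T + X = 0 (so T = ∑_{n≥1} catalan(n−1)Xⁿ). For all formal power series R, L ∈ ℝ⟦X⟧ satisfying L·(1 − T)² = R·(1 − T)² + X·L, one has (1 − 4X)·(2L − R)² = R². (Equivalently, L = R·(1/2)·(1 + 1/√(1 − 4x)): the generating function for the number of vertices over all ordered trees whose subtree has a given property equals R times (1 + (1−4x)^{−1/2})/2, where R is the generating function for the number of ordered trees whose root has that property.) -/
/-!
The quadratic relation `T² − T + x = 0` makes `1 − 4x = (1 − 2T)²` a perfect square, and turns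
twice the defining equation of `L` into `(1 − T)·((1 − 2T)(2L − R) − R) = 0`. Since `T ≠ 1`, this
cancels to `(1 − 2T)(2L − R) = R`, whose square is the claim.
-/

section QuadraticRoot

variable {A : Type*} [CommRing A] {T x L R : A}

theorem one_sub_four_mul_eq_sq (hT : T ^ 2 - T + x = 0) : 1 - 4 * x = (1 - 2 * T) ^ 2 := by
  linear_combination (-4 : A) * hT

theorem one_sub_ne_zero_of_sq_sub_add_eq_zero (hT : T ^ 2 - T + x = 0) (hx : x ≠ 0) :
    1 - T ≠ 0 :=
  fun h ↦ hx (by linear_combination hT + T * h)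

theorem one_sub_two_mul_mul_two_mul_sub_eq [IsDomain A] (hT : T ^ 2 - T + x = 0) (hx : x ≠ 0)
    (hL : L * (1 - T) ^ 2 = R * (1 - T) ^ 2 + x * L) :
    (1 - 2 * T) * (2 * L - R) = R :=
  mul_left_cancel₀ (one_sub_ne_zero_of_sq_sub_add_eq_zero hT hx)
    (by linear_combination 2 * hL + 2 * L * hT)

theorem one_sub_four_mul_mul_two_mul_sub_sq_eq [IsDomain A] (hT : T ^ 2 - T + x = 0)
    (hx : x ≠ 0) (hL : L * (1 - T) ^ 2 = R * (1 - T) ^ 2 + x * L) :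
    (1 - 4 * x) * (2 * L - R) ^ 2 = R ^ 2 := by
  rw [one_sub_four_mul_eq_sq hT, ← mul_pow, one_sub_two_mul_mul_two_mul_sub_eq hT hx hL]

end QuadraticRoot

theorem ordered_trees_subtree_gf_relation_general
    (T : PowerSeries ℝ)
    (hT : T ^ 2 - T + PowerSeries.X = 0)
    (R L : PowerSeries ℝ)
    (hL : L * (1 - T) ^ 2 = R * (1 - T) ^ 2 + PowerSeries.X * L) :
    (1 - 4 * PowerSeries.X) * (2 * L - R) ^ 2 = R ^ 2 :=
  one_sub_four_mul_mul_two_mul_sub_sq_eq hT PowerSeries.X_ne_zero hL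

/-- Let `T ∈ ℝ⟦X⟧` be the unique formal power series with constant term 0
satisfying `T² − T + X = 0` (so `T = ∑_{n≥1} catalan(n−1)Xⁿ`). For all formal power
series `R, L` satisfying `L·(1 − T)² = R·(1 − T)² + X·L`, one has
`(1 − 4X)·(2L − R)² = R²` (i.e. `L = R·(1 + 1/√(1 − 4X))/2`). -/
theorem ordered_trees_subtree_gf_relation
    (T : PowerSeries ℝ) (hT0 : PowerSeries.constantCoeff T = 0)
    (hT : T ^ 2 - T + PowerSeries.X = 0)
    (R L : PowerSeries ℝ)
    (hL : L * (1 - T) ^ 2 = R * (1 - T) ^ 2 + PowerSeries.X * L) :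
    (1 - 4 * PowerSeries.X) * (2 * L - R) ^ 2 = R ^ 2 :=
  ordered_trees_subtree_gf_relation_general T hT R L hL
end

section
/- Fix an integer k ≥ 1. Define l : ℕ → ℝ by l(0) = 0 and, for n ≥ 1, l(n) = catalan(k−1)·[n = k] + ∑_{i=1}^{n−1} l(i)·catalan(n−i), so that l(n) is the total number of vertices having exactly k vertices in their subtree, summed over all ordered trees with n vertices. Then l(n)/(n·catalan(n−1)) → catalan(k−1)/2^{2k−1} as n → ∞; that is, the probability that a uniformly random vertex of a uniformly random ordered tree with n vertices has exactly k vertices in its subtree tends to catalan(k−1)/2^{2k−1}. -/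
/-!
Write `B m = centralBinom m`, `C m = catalan m` and `c = C (k - 1)`. Shifted to start at `n = k`,
the recurrence becomes `a m = c·[m = 0] + ∑_{j<m} a j · C (m - j)`, whose solution is `a 0 = c`
and `a m = c/2 · B m` for `m ≥ 1`; this comes down to the generating-function identity
`B(x) C(x) = (B(x) - 1) / (2x)`. Since `n · C (n - 1) = B (n - 1)`, for `n > k` the probability is
`c/2 · B (n - k) / B (n - 1)`, and `B m / B (m + 1) = (m + 1) / (4m + 2) → 1/4`.
-/

open Filter

open Finset Nat

namespace Nat

theorem centralBinom_succ_add_two_mul_catalan (m : ℕ) :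
    centralBinom (m + 1) + 2 * catalan m = 4 * centralBinom m := by
  have hB := succ_mul_centralBinom_succ m
  have hC := succ_mul_catalan_eq_centralBinom m
  refine Nat.eq_of_mul_eq_mul_left (by omega : 0 < m + 1) ?_
  rw [mul_add, hB, mul_left_comm, hC]
  ring

theorem two_mul_sum_antidiagonal_centralBinom_mul_catalan (m : ℕ) :
    2 * ∑ p ∈ antidiagonal m, centralBinom p.1 * catalan p.2 = centralBinom (m + 1) := by
  induction m with
  | zero => simp [centralBinom_eq_two_mul_choose]
  | succ m ih =>
    have hshift : ∑ p ∈ antidiagonal m, centralBinom (p.1 + 1) * catalan p.2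
        + 2 * catalan (m + 1) = 4 * ∑ p ∈ antidiagonal m, centralBinom p.1 * catalan p.2 := by
      simp only [catalan_succ', mul_sum, ← sum_add_distrib]
      refine sum_congr rfl fun p _ => ?_
      rw [← mul_assoc 2, ← add_mul, centralBinom_succ_add_two_mul_catalan, mul_assoc]
    have := centralBinom_succ_add_two_mul_catalan (m + 1)
    rw [Finset.Nat.sum_antidiagonal_succ]
    simp only [centralBinom_zero, one_mul]
    omega

theorem sum_range_centralBinom_mul_catalan_add_catalan (m : ℕ) :
    ∑ j ∈ range m, centralBinom j * catalan (m - j) + catalan m = centralBinom m := by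
  have h := two_mul_sum_antidiagonal_centralBinom_mul_catalan m
  rw [Finset.Nat.sum_antidiagonal_eq_sum_range_succ_mk, sum_range_succ, Nat.sub_self,
    catalan_zero, mul_one] at h
  dsimp only at h
  have := centralBinom_succ_add_two_mul_catalan m
  omega

theorem tendsto_centralBinom_div_centralBinom_succ :
    Tendsto (fun m : ℕ => (centralBinom m : ℝ) / centralBinom (m + 1)) atTop (nhds (1 / 4)) := by
  have hratio (m : ℕ) :
      (centralBinom m : ℝ) / centralBinom (m + 1) = 1 / 4 + (8 * m + 4 : ℝ)⁻¹ := by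
    have h : ((m : ℝ) + 1) * centralBinom (m + 1) = 2 * (2 * m + 1) * centralBinom m := by
      exact_mod_cast succ_mul_centralBinom_succ m
    have := centralBinom_ne_zero (m + 1)
    field_simp
    linear_combination -8 * h
  have hden : Tendsto (fun m : ℕ => (8 * m + 4 : ℝ)) atTop atTop :=
    tendsto_atTop_add_const_right _ _ (tendsto_natCast_atTop_atTop.const_mul_atTop (by norm_num))
  simpa only [hratio, add_zero, Pi.inv_apply] using tendsto_const_nhds.add hden.inv_tendsto_atTop

theorem tendsto_centralBinom_div_centralBinom_add (d : ℕ) :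
    Tendsto (fun m : ℕ => (centralBinom m : ℝ) / centralBinom (m + d)) atTop
      (nhds ((1 / 4) ^ d)) := by
  induction d with
  | zero => simp [centralBinom_ne_zero]
  | succ d ih =>
    have hstep := tendsto_centralBinom_div_centralBinom_succ.comp (tendsto_add_atTop_nat d)
    refine (ih.mul hstep).congr fun m => ?_
    have := centralBinom_ne_zero (m + d)
    simp only [Function.comp_apply, ← add_assoc]
    field_simp

end Nat

/-- Unlike the statement's sum over `1 ≤ i ≤ n - 1`, the sum includes `i = 0` and the equation is
also imposed at `n = 0`; for `k ≥ 1` both changes amount to `l 0 = 0`. -/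
def CatalanRecurrence (k : ℕ) (c : ℝ) (l : ℕ → ℝ) : Prop :=
  ∀ n, l n = (if n = k then c else 0) + ∑ i ∈ range n, l i * catalan (n - i)

namespace CatalanRecurrence

variable {k : ℕ} {c : ℝ} {l : ℕ → ℝ}

theorem eq_zero_of_lt (h : CatalanRecurrence k c l) {n : ℕ} (hn : n < k) : l n = 0 := by
  induction n using Nat.strong_induction_on with
  | _ n ih =>
    rw [h n, if_neg hn.ne, zero_add]
    refine sum_eq_zero fun i hi => ?_
    have hin := mem_range.mp hi
    rw [ih i hin (by omega), zero_mul]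

theorem shift (h : CatalanRecurrence k c l) : CatalanRecurrence 0 c (fun m => l (k + m)) := by
  intro m
  dsimp only
  rw [h, sum_range_add,
    sum_eq_zero fun i hi => by rw [h.eq_zero_of_lt (mem_range.mp hi), zero_mul], zero_add]
  simp only [add_eq_left, add_tsub_add_eq_tsub_left]

theorem eq_of_pos (h : CatalanRecurrence 0 c l) {m : ℕ} (hm : 0 < m) :
    l m = c / 2 * centralBinom m := by
  induction m using Nat.strong_induction_on with
  | _ m ih =>
    have hl0 : l 0 = c := by simpa using h 0
    have hid : ∑ j ∈ Ico 1 m, centralBinom j * catalan (m - j) + 2 * catalan m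
        = centralBinom m := by
      have := sum_range_centralBinom_mul_catalan_add_catalan m
      rw [sum_range_eq_add_Ico _ hm, centralBinom_zero, one_mul, Nat.sub_zero] at this
      omega
    rw [h, if_neg hm.ne', zero_add, sum_range_eq_add_Ico _ hm, hl0, Nat.sub_zero,
      sum_congr rfl fun j hj => by rw [ih j (mem_Ico.mp hj).2 (mem_Ico.mp hj).1], ← hid]
    push_cast
    rw [mul_add, mul_sum]
    simp only [mul_assoc]
    ring

theorem of_sum_Icc (hk : 1 ≤ k) (hl0 : l 0 = 0)
    (hl : ∀ n, 1 ≤ n →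
      l n = (if n = k then c else 0) + ∑ i ∈ Icc 1 (n - 1), l i * catalan (n - i)) :
    CatalanRecurrence k c l := by
  rintro (_ | n)
  · simp [hl0, if_neg (by omega : 0 ≠ k)]
  · rw [hl _ (by omega), sum_range_eq_add_Ico _ (by omega), hl0, zero_mul, zero_add,
      Nat.add_sub_cancel, Ico_add_one_right_eq_Icc]

end CatalanRecurrence

/-- Fix `k ≥ 1`. With `l(n)` the total number of vertices having exactly
`k` vertices in their subtree over all ordered trees with `n` vertices (defined by
`l(0) = 0` and, for `n ≥ 1`, `l(n) = catalan(k−1)·[n = k] + ∑_{i=1}^{n−1} l(i)·catalan(n−i)`),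
one has `l(n)/(n·catalan(n−1)) → catalan(k−1)/2^{2k−1}` as `n → ∞`. -/
theorem ordered_trees_prob_k_vertices_in_subtree
    (k : ℕ) (hk : 1 ≤ k)
    (l : ℕ → ℝ) (hl0 : l 0 = 0)
    (hl : ∀ n, 1 ≤ n →
      l n = (if n = k then (catalan (k - 1) : ℝ) else 0)
        + ∑ i ∈ Finset.Icc 1 (n - 1), l i * (catalan (n - i) : ℝ)) :
    Tendsto (fun n : ℕ => l n / (n * (catalan (n - 1) : ℝ))) atTop
      (nhds ((catalan (k - 1) : ℝ) / 2 ^ (2 * k - 1))) := by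
  set c : ℝ := (catalan (k - 1) : ℝ)
  have hrec := CatalanRecurrence.of_sum_Icc hk hl0 hl
  have hlim := ((tendsto_centralBinom_div_centralBinom_add (k - 1)).comp
    (tendsto_add_atTop_nat 1)).const_mul (c / 2)
  have hval : c / 2 * (1 / 4) ^ (k - 1) = c / 2 ^ (2 * k - 1) := by
    rw [show 2 * k - 1 = 2 * (k - 1) + 1 by omega, pow_succ, pow_mul, one_div_pow]
    ring
  rw [← tendsto_add_atTop_iff_nat (k + 1), ← hval]
  refine hlim.congr fun m => ?_
  have hdenom : ((m + (k + 1) : ℕ) : ℝ) * catalan (m + (k + 1) - 1)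
      = centralBinom (m + 1 + (k - 1)) := by
    rw [show m + 1 + (k - 1) = m + (k + 1) - 1 by omega, ← succ_mul_catalan_eq_centralBinom]
    push_cast [show m + (k + 1) - 1 + 1 = m + (k + 1) by omega]
    ring
  rw [Function.comp_apply, hdenom, show m + (k + 1) = k + (m + 1) by ring,
    hrec.shift.eq_of_pos m.succ_pos, mul_div_assoc]
end

section
/- Let B ∈ ℝ⟦X⟧ be the unique formal power series with constant term 0 satisfying B² − B + X = 0 (so B = ∑_{n≥1} catalan(n−1)Xⁿ is the generating function for full binary trees counted by leaves). For all formal power series R, V ∈ ℝ⟦X⟧ satisfying V = R + 2·V·B, one has (1 − 4X)·V² = R². (Equivalently, V = R/√(1 − 4x): the generating function for the number of vertices over all full binary trees whose subtree has a given property equals the generating function R for the number of full binary trees whose root has that property divided by √(1 − 4x).) -/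
theorem one_sub_two_mul_sq_of_sq_sub_add_eq_zero {A : Type*} [CommRing A] {b x : A}
    (h : b ^ 2 - b + x = 0) : (1 - 2 * b) ^ 2 = 1 - 4 * x := by
  linear_combination 4 * h

theorem full_binary_trees_subtree_gf_relation_general
    (B : PowerSeries ℝ)
    (hB : B ^ 2 - B + PowerSeries.X = 0)
    (R V : PowerSeries ℝ) (hV : V = R + 2 * V * B) :
    (1 - 4 * PowerSeries.X) * V ^ 2 = R ^ 2 := by
  have hR : R = (1 - 2 * B) * V := by linear_combination -hV
  rw [hR, mul_pow, one_sub_two_mul_sq_of_sq_sub_add_eq_zero hB]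

/-- Let `B ∈ ℝ⟦X⟧` be the unique formal power series with constant term 0
satisfying `B² − B + X = 0` (the generating function for full binary trees counted by
leaves). For all formal power series `R, V` satisfying `V = R + 2·V·B`, one has
`(1 − 4X)·V² = R²` (i.e. `V = R/√(1 − 4X)`). -/
theorem full_binary_trees_subtree_gf_relation
    (B : PowerSeries ℝ) (hB0 : PowerSeries.constantCoeff B = 0)
    (hB : B ^ 2 - B + PowerSeries.X = 0)
    (R V : PowerSeries ℝ) (hV : V = R + 2 * V * B) :
    (1 - 4 * PowerSeries.X) * V ^ 2 = R ^ 2 :=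
  full_binary_trees_subtree_gf_relation_general B hB R V hV
end

section
/- For every real number x with |x| < 1/4, the series ∑_{n=1}^∞ n·catalan(n−1)·xⁿ converges and ∑_{n=1}^∞ n·catalan(n−1)·xⁿ = x/√(1 − 4x). (This is the generating function for the total number of leaves in all full binary trees with n leaves.) -/
/-!
Since `(n + 1) * catalan n = centralBinom n`, the series is `x` times `∑ C(2n, n) xⁿ`, which is
the binomial series of `(1 - t) ^ (-1/2)` at `t = 4x`: its `n`-th coefficient is the rising
factorial `(1/2) (3/2) ⋯ (n - 1/2) / n! = C(2n, n) / 4ⁿ`.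
-/

section

variable {K : Type*} [Field K] [CharZero K]

theorem four_pow_mul_ascPochhammer_eval_half (n : ℕ) :
    (4 : K) ^ n * (ascPochhammer K n).eval (1 / 2) = n.factorial * n.centralBinom := by
  induction n with
  | zero => simp
  | succ n ih =>
    have h : ((n : K) + 1) * (n + 1).centralBinom = 2 * (2 * n + 1) * n.centralBinom := by
      exact_mod_cast Nat.succ_mul_centralBinom_succ n
    rw [ascPochhammer_succ_eval, Nat.factorial_succ, pow_succ]
    push_cast
    linear_combination (4 * ((n : K) + 1 / 2)) * ih - (n.factorial : K) * h

theorem multichoose_half_mul_four_pow (n : ℕ) :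
    Ring.multichoose (1 / 2 : K) n * 4 ^ n = n.centralBinom := by
  have h := Ring.factorial_nsmul_multichoose_eq_ascPochhammer (1 / 2 : K) n
  rw [Polynomial.ascPochhammer_smeval_eq_eval, nsmul_eq_mul] at h
  have hf : (n.factorial : K) ≠ 0 := Nat.cast_ne_zero.mpr n.factorial_ne_zero
  apply mul_left_cancel₀ hf
  linear_combination (4 : K) ^ n * h + four_pow_mul_ascPochhammer_eval_half (K := K) n

end

theorem hasSum_centralBinom_mul_pow {x : ℝ} (hx : |x| < 1 / 4) :
    HasSum (fun n ↦ (n.centralBinom : ℝ) * x ^ n) (1 / √(1 - 4 * x)) := by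
  have h4x : 4 * x ∈ Metric.eball (0 : ℝ) 1 := by
    rw [Metric.mem_eball, edist_zero_right, enorm_eq_nnnorm, ENNReal.coe_lt_one_iff,
      ← NNReal.coe_lt_coe, coe_nnnorm, norm_mul, Real.norm_eq_abs, Real.norm_eq_abs]
    norm_num
    linarith
  have h := (Real.one_div_one_sub_rpow_hasFPowerSeriesOnBall_zero (1 / 2)).hasSum h4x
  simp only [FormalMultilinearSeries.ofScalars_apply_eq, zero_add, smul_eq_mul,
    ← Real.sqrt_eq_rpow] at h
  refine h.congr_fun fun n ↦ ?_
  rw [← Ring.multichoose_eq, ← multichoose_half_mul_four_pow, mul_pow]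
  ring

/-- For every real `x` with `|x| < 1/4`, the series
`∑_{n≥1} n·catalan(n−1)·xⁿ` (indexed below by `n` with term `(n+1)·catalan(n)·x^{n+1}`)
converges to `x/√(1 − 4x)`: the generating function for the total number of leaves in
all full binary trees with `n` leaves. -/
theorem full_binary_trees_total_leaves_gf
    (x : ℝ) (hx : |x| < 1 / 4) :
    HasSum (fun n : ℕ => ((n + 1 : ℕ) : ℝ) * (catalan n : ℝ) * x ^ (n + 1))
      (x / Real.sqrt (1 - 4 * x)) := by
  have h := (hasSum_centralBinom_mul_pow hx).mul_left x
  rw [mul_one_div] at h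
  refine h.congr_fun fun n ↦ ?_
  rw [← Nat.cast_mul, succ_mul_catalan_eq_centralBinom, pow_succ]
  ring
end

section
/- For every real number x with 0 < x ≤ 3 − 2√2, the series ∑_{n=1}^∞ s(n)·xⁿ converges and ∑_{n=1}^∞ s(n)·xⁿ = 2x/(1 + x + √(1 − 6x + x²)). -/
/-!
With `b n = s (n + 1) xⁿ⁺¹` the recurrence reads `b (n + 1) + x b n = 2 (b ⋆ b) n` and `b 0 = x`.
Summing it up to `N` and bounding the truncated Cauchy square by the square of the partial sum
gives `P (N + 1) ≤ x + 2 P N ² - x P N` for `P N = ∑_{n<N} b n`, so the partial sums never exceed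
the smaller root `t = (1 + x - √(1 - 6x + x²)) / 4` of `2y² - (1 + x) y + x`, as long as `x ≤ t`;
this is exactly the condition `x ≤ 3 - 2√2`. Hence the series converges, and the Cauchy product
formula makes its sum a root of the same quadratic which is at most `t`, so it equals
`t = 2x / (1 + x + √(1 - 6x + x²))`.
-/

open Finset

theorem sum_range_sum_antidiagonal_mul_le_sq_s13 {R : Type*} [CommSemiring R] [PartialOrder R]
    [IsOrderedRing R] {f : ℕ → R} (hf : ∀ n, 0 ≤ f n) (N : ℕ) :
    ∑ n ∈ range N, ∑ ij ∈ antidiagonal n, f ij.1 * f ij.2 ≤ (∑ n ∈ range N, f n) ^ 2 := by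
  simp only [Nat.sum_antidiagonal_eq_sum_range_succ fun i j => f i * f j, Nat.succ_eq_add_one]
  rw [sum_range_diag_flip N fun i j => f i * f j, sq, sum_mul]
  gcongr with i hi
  rw [← mul_sum]
  exact mul_le_mul_of_nonneg_left
    (sum_le_sum_of_subset_of_nonneg (range_mono (Nat.sub_le N i)) fun j _ _ => hf j) (hf i)

section ConvolutionRecurrence

variable {x : ℝ} {b : ℕ → ℝ} (hb : ∀ n, 0 ≤ b n) (hb0 : b 0 = x)
  (hrec : ∀ n, b (n + 1) + x * b n = 2 * ∑ ij ∈ antidiagonal n, b ij.1 * b ij.2)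
include hb0 hrec

theorem sum_range_succ_of_convolution_recurrence (N : ℕ) :
    ∑ n ∈ range (N + 1), b n + x * ∑ n ∈ range N, b n =
      x + 2 * ∑ n ∈ range N, ∑ ij ∈ antidiagonal n, b ij.1 * b ij.2 := by
  calc ∑ n ∈ range (N + 1), b n + x * ∑ n ∈ range N, b n
      = x + ∑ n ∈ range N, (b (n + 1) + x * b n) := by
        rw [sum_range_succ', hb0, sum_add_distrib, mul_sum]; ring
    _ = _ := by simp only [hrec, ← mul_sum]

include hb

theorem sum_range_le_of_convolution_recurrence {t : ℝ} (hxt : x ≤ t)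
    (ht : x + 2 * t ^ 2 ≤ (1 + x) * t) (N : ℕ) : ∑ n ∈ range N, b n ≤ t := by
  have hx : 0 ≤ x := hb0 ▸ hb 0
  induction N with
  | zero => simpa using hx.trans hxt
  | succ N ih =>
    have hconv := sum_range_sum_antidiagonal_mul_le_sq_s13 hb N
    have hQ : 0 ≤ ∑ n ∈ range N, b n := sum_nonneg fun n _ => hb n
    have := sum_range_succ_of_convolution_recurrence hb0 hrec N
    -- `x + 2 Q² - x Q ≤ x + 2 t² - x t ≤ t`, as `(t - Q) (2 t + 2 Q - x) ≥ 0` once `x ≤ t`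
    nlinarith [mul_nonneg (sub_nonneg.2 ih) (by linarith : 0 ≤ 2 * t + 2 * ∑ n ∈ range N, b n - x)]

theorem tsum_quadratic_of_convolution_recurrence (hsum : Summable b) :
    2 * (∑' n, b n) ^ 2 - (1 + x) * ∑' n, b n + x = 0 := by
  set L := ∑' n, b n
  have hmul : Summable fun p : ℕ × ℕ => b p.1 * b p.2 := hsum.mul_of_nonneg hsum hb hb
  have hconv : HasSum (fun n => 2 * ∑ ij ∈ antidiagonal n, b ij.1 * b ij.2) (2 * L ^ 2) := by
    rw [sq, hsum.tsum_mul_tsum_eq_tsum_sum_antidiagonal hsum hmul]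
    exact (summable_sum_mul_antidiagonal_of_summable_mul hmul).hasSum.mul_left 2
  have hshift : HasSum (fun n => b (n + 1)) (L - x) := by
    rw [← hb0, ← sum_range_one b]
    exact (hasSum_nat_add_iff' 1).2 hsum.hasSum
  have hlhs : HasSum (fun n => b (n + 1) + x * b n) (L - x + x * L) :=
    hshift.add (hsum.hasSum.mul_left x)
  simp only [hrec] at hlhs
  linear_combination -(hlhs.unique hconv)

theorem hasSum_of_convolution_recurrence {q : ℝ} (hq : q ^ 2 = 1 - 6 * x + x ^ 2) (hq0 : 0 ≤ q)
    (hxq : 3 * x + q ≤ 1) : HasSum b (2 * x / (1 + x + q)) := by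
  have hx : 0 ≤ x := hb0 ▸ hb 0
  have hbound := sum_range_le_of_convolution_recurrence hb hb0 hrec (t := (1 + x - q) / 4)
    (by linarith) (by linear_combination hq / 8)
  have hsum : Summable b := summable_of_sum_range_le hb hbound
  have hLt : ∑' n, b n ≤ (1 + x - q) / 4 := Real.tsum_le_of_sum_range_le hb hbound
  have hquad := tsum_quadratic_of_convolution_recurrence hb hb0 hrec hsum
  have hval : 2 * x / (1 + x + q) = (1 + x - q) / 4 := by
    rw [div_eq_iff (by linarith)]; linear_combination hq / 4
  rw [hval, ← le_antisymm hLt (not_lt.1 fun hlt => ?_)]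
  · exact hsum.hasSum
  -- `2 y² - (1 + x) y + x = 2 (y - (1 + x - q) / 4) (y - (1 + x + q) / 4)` is positive below both roots
  nlinarith [mul_pos (sub_pos.2 hlt) (by linarith : 0 < (1 + x + q) / 4 - ∑' n, b n)]

end ConvolutionRecurrence

theorem schroeder_shifted_recurrence (s : ℕ → ℕ) (hs1 : s 1 = 1)
    (hs : ∀ n, 2 ≤ n → s n = 2 * ∑ i ∈ Finset.Icc 1 (n - 1), s i * s (n - i) - s (n - 1))
    (n : ℕ) : s (n + 2) + s (n + 1) = 2 * ∑ ij ∈ antidiagonal n, s (ij.1 + 1) * s (ij.2 + 1) := by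
  have hconv : ∑ i ∈ Icc 1 (n + 1), s i * s (n + 2 - i) =
      ∑ ij ∈ antidiagonal n, s (ij.1 + 1) * s (ij.2 + 1) := by
    rw [Nat.sum_antidiagonal_eq_sum_range_succ fun i j => s (i + 1) * s (j + 1),
      ← Ico_add_one_right_eq_Icc, sum_Ico_eq_sum_range]
    exact sum_congr rfl fun k hk => by
      rw [mem_range] at hk
      congr 2 <;> omega
  have hlast : s (n + 1) ≤ ∑ ij ∈ antidiagonal n, s (ij.1 + 1) * s (ij.2 + 1) := by
    simpa [hs1] using single_le_sum (fun ij _ => Nat.zero_le (s (ij.1 + 1) * s (ij.2 + 1)))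
      (mem_antidiagonal.2 rfl : (n, 0) ∈ antidiagonal n)
  have := hs (n + 2) (by omega)
  rw [show n + 2 - 1 = n + 1 from rfl, hconv] at this
  omega

theorem schroeder_terms_recurrence (s : ℕ → ℕ) (hs1 : s 1 = 1)
    (hs : ∀ n, 2 ≤ n → s n = 2 * ∑ i ∈ Finset.Icc 1 (n - 1), s i * s (n - i) - s (n - 1))
    (x : ℝ) (n : ℕ) :
    (s (n + 2) : ℝ) * x ^ (n + 2) + x * ((s (n + 1) : ℝ) * x ^ (n + 1)) =
      2 * ∑ ij ∈ antidiagonal n,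
        (s (ij.1 + 1) : ℝ) * x ^ (ij.1 + 1) * ((s (ij.2 + 1) : ℝ) * x ^ (ij.2 + 1)) := by
  calc (s (n + 2) : ℝ) * x ^ (n + 2) + x * ((s (n + 1) : ℝ) * x ^ (n + 1))
      = ((s (n + 2) + s (n + 1) : ℕ) : ℝ) * x ^ (n + 2) := by push_cast; ring
    _ = 2 * ∑ ij ∈ antidiagonal n, (s (ij.1 + 1) : ℝ) * s (ij.2 + 1) * x ^ (n + 2) := by
      rw [schroeder_shifted_recurrence s hs1 hs, ← sum_mul]; push_cast; ring
    _ = _ := by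
      congr 1
      refine sum_congr rfl fun ij hij => ?_
      rw [← mem_antidiagonal.1 hij]
      ring

theorem schroeder_discriminant_nonneg {x : ℝ} (hx : x ≤ 3 - 2 * √2) : 0 ≤ 1 - 6 * x + x ^ 2 := by
  have h2 : √2 ^ 2 = 2 := Real.sq_sqrt (by norm_num)
  nlinarith [Real.sqrt_nonneg 2]

theorem three_mul_add_sqrt_schroeder_discriminant_le_one {x : ℝ} (hx : 0 ≤ x)
    (hx' : x ≤ 3 - 2 * √2) : 3 * x + √(1 - 6 * x + x ^ 2) ≤ 1 := by
  have h2 : √2 ^ 2 = 2 := Real.sq_sqrt (by norm_num)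
  have hx3 : x ≤ 1 / 3 := by nlinarith [Real.sqrt_nonneg 2]
  have := Real.sqrt_le_sqrt (show 1 - 6 * x + x ^ 2 ≤ (1 - 3 * x) ^ 2 by nlinarith)
  rw [Real.sqrt_sq (by linarith)] at this
  linarith

/-- For every real `x` with `0 < x ≤ 3 − 2√2`, the series
`∑_{n≥1} s(n)·xⁿ` (where `s` is the Schröder tree counting sequence, with `s 0 = 0`)
converges to `2x/(1 + x + √(1 − 6x + x²))`. Since `s 0 = 0`, summing over all `n : ℕ`
is the same as summing over `n ≥ 1`. -/
theorem schroeder_generating_function_value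
    (s : ℕ → ℕ) (hs0 : s 0 = 0) (hs1 : s 1 = 1)
    (hs : ∀ n, 2 ≤ n →
      s n = 2 * ∑ i ∈ Finset.Icc 1 (n - 1), s i * s (n - i) - s (n - 1))
    (x : ℝ) (hx : 0 < x) (hx' : x ≤ 3 - 2 * Real.sqrt 2) :
    HasSum (fun n : ℕ => (s n : ℝ) * x ^ n)
      (2 * x / (1 + x + Real.sqrt (1 - 6 * x + x ^ 2))) := by
  have hshift := hasSum_of_convolution_recurrence (b := fun n => (s (n + 1) : ℝ) * x ^ (n + 1))
    (fun n => by positivity) (by simp [hs1]) (schroeder_terms_recurrence s hs1 hs x)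
    (Real.sq_sqrt (schroeder_discriminant_nonneg hx')) (Real.sqrt_nonneg _)
    (three_mul_add_sqrt_schroeder_discriminant_le_one hx.le hx')
  rw [← hasSum_nat_add_iff' 1]
  simpa [hs0] using hshift
end

section
/- Fix a real number x with 0 < x < 3 − 2√2, and set u := 1 − 6x + x² (so u > 0) and S := (1 + x − √u)/4. Then the function f(y) := (1 + xy − √((1 + xy)² − 4xy(y + 1)))/(2y + 2) is differentiable at y = 1 and f′(1) = ((3 − x + √u)/(4√u))·S. (That is, differentiating the bivariate Schröder generating function with respect to y and setting y = 1 yields the generating function V(x) = ((3 − x + √(1−6x+x²))/(4√(1−6x+x²)))·S(x) for the total number of vertices in all Schröder trees with n leaves.) -/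
/-!
The vertex generating function is `(1 + xy − √D(x, y)) / (2y + 2)` with discriminant
`D(x, y) = (1 + xy)² − 4xy(y + 1)`, so its `y`-derivative comes from the quotient and chain
rules as soon as `D ≠ 0`. At `y = 1` the discriminant is `u = 1 − 6x + x² = (3 − x)² − 8`,
which is positive below `3 − 2√2`; substituting `√u² = u` then collapses the quotient rule
to `(3 − x + √u) / (4√u) · S`.
-/

namespace Schroeder

noncomputable def disc (x y : ℝ) : ℝ := (1 + x * y) ^ 2 - 4 * x * y * (y + 1)

noncomputable def vertexGF (x y : ℝ) : ℝ := (1 + x * y - √(disc x y)) / (2 * y + 2)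

theorem disc_one (x : ℝ) : disc x 1 = 1 - 6 * x + x ^ 2 := by
  rw [disc]; ring

theorem one_sub_six_mul_add_sq_pos {x : ℝ} (hx : x < 3 - 2 * √2) : 0 < 1 - 6 * x + x ^ 2 := by
  have h2 : √2 ^ 2 = 2 := Real.sq_sqrt zero_le_two
  have hfac : 1 - 6 * x + x ^ 2 = (3 - x - 2 * √2) * (3 - x + 2 * √2) := by
    linear_combination 4 * h2
  rw [hfac]
  have := Real.sqrt_nonneg 2
  apply mul_pos <;> linarith

theorem hasDerivAt_disc (x y : ℝ) :
    HasDerivAt (disc x) (2 * x * (1 + x * y) - 4 * x * (2 * y + 1)) y := by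
  have hlin : HasDerivAt (fun y => 1 + x * y) x y := by
    simpa using ((hasDerivAt_id y).const_mul x).const_add 1
  have hquad : HasDerivAt (fun y => 4 * x * y * (y + 1)) (4 * x * (2 * y + 1)) y :=
    (((hasDerivAt_id y).const_mul (4 * x)).fun_mul ((hasDerivAt_id y).add_const 1)).congr_deriv
      (by simp only [id]; ring)
  exact ((hlin.fun_pow 2).sub hquad).congr_deriv (by ring)

theorem hasDerivAt_vertexGF {x y : ℝ} (hD : disc x y ≠ 0) (hy : 2 * y + 2 ≠ 0) :
    HasDerivAt (vertexGF x)
      (((x - (2 * x * (1 + x * y) - 4 * x * (2 * y + 1)) / (2 * √(disc x y))) * (2 * y + 2)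
        - (1 + x * y - √(disc x y)) * 2) / (2 * y + 2) ^ 2) y := by
  have hlin : HasDerivAt (fun y => 1 + x * y) x y := by
    simpa using ((hasDerivAt_id y).const_mul x).const_add 1
  have hden : HasDerivAt (fun y : ℝ => 2 * y + 2) 2 y := by
    simpa using ((hasDerivAt_id y).const_mul 2).add_const 2
  exact (hlin.sub ((hasDerivAt_disc x y).sqrt hD)).div hden hy

end Schroeder

theorem schroeder_vertex_gf_deriv_general
    (x u S : ℝ) (hx' : x < 3 - 2 * Real.sqrt 2)
    (hu : u = 1 - 6 * x + x ^ 2) (hS : S = (1 + x - Real.sqrt u) / 4) :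
    HasDerivAt
      (fun y : ℝ =>
        (1 + x * y - Real.sqrt ((1 + x * y) ^ 2 - 4 * x * y * (y + 1))) / (2 * y + 2))
      (((3 - x + Real.sqrt u) / (4 * Real.sqrt u)) * S) 1 := by
  have hu_pos : 0 < u := hu ▸ Schroeder.one_sub_six_mul_add_sq_pos hx'
  have hdisc : Schroeder.disc x 1 = u := by rw [Schroeder.disc_one, hu]
  have hs : √u ≠ 0 := (Real.sqrt_pos.2 hu_pos).ne'
  have hs2 : √u ^ 2 = u := Real.sq_sqrt hu_pos.le
  refine (Schroeder.hasDerivAt_vertexGF (hdisc ▸ hu_pos.ne') (by norm_num)).congr_deriv ?_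
  rw [hdisc, hS]
  field_simp
  linear_combination 48 * hs2 + 48 * hu

/-- Fix a real `x` with `0 < x < 3 − 2√2`, and set `u = 1 − 6x + x²`
(so `u > 0`) and `S = (1 + x − √u)/4`. Then the bivariate Schröder generating function
`f(y) = (1 + xy − √((1 + xy)² − 4xy(y + 1)))/(2y + 2)` is differentiable at `y = 1`
with `f′(1) = ((3 − x + √u)/(4√u))·S`, the generating function for the total number of
vertices in all Schröder trees with `n` leaves. -/
theorem schroeder_vertex_gf_deriv
    (x u S : ℝ) (hx : 0 < x) (hx' : x < 3 - 2 * Real.sqrt 2)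
    (hu : u = 1 - 6 * x + x ^ 2) (hS : S = (1 + x - Real.sqrt u) / 4) :
    HasDerivAt
      (fun y : ℝ =>
        (1 + x * y - Real.sqrt ((1 + x * y) ^ 2 - 4 * x * y * (y + 1))) / (2 * y + 2))
      (((3 - x + Real.sqrt u) / (4 * Real.sqrt u)) * S) 1 :=
  schroeder_vertex_gf_deriv_general x u S hx' hu hS
end

section
/- Let S ∈ ℝ⟦X⟧ be the unique formal power series with constant term 0 satisfying 2S² − (1 + X)S + X = 0 (the generating function for Schröder trees counted by leaves). For all formal power series R, T ∈ ℝ⟦X⟧ satisfying T·(2(1 − S)² − 1) = R·(1 − S)², one has (1 − 6X + X²)·T² = R²·(1 − S)². (Equivalently, if T = R + T·(1/(1−S)² − 1), i.e. T = R + ∑_{m≥2} m·T·S^{m−1}, then T = R·(3 − x + √(1−6x+x²))/(4√(1−6x+x²)): the generating function for the number of vertices over all Schröder trees whose subtree has a given property equals R times (3 − x + √(1−6x+x²))/(4√(1−6x+x²)), where R is the generating function for the number of Schröder trees whose root has that property.) -/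
/-! With `u = 1 - S` the quadratic reads `2u² - (3 - X)u + 1 = 0`. Hence `u` is a unit, with
inverse `3 - X - 2u`, and `2u² - 1 = (3 - X)u - 2`; squaring the latter and using the quadratic
once more gives `(2u² - 1)² = (1 - 6X + X²)u²`. Squaring the relation between `T` and `R` and
cancelling the unit `u²` yields the claim, over any commutative ring. -/

section Schroeder

variable {A : Type*} [CommRing A] {s x : A}

theorem isUnit_one_sub_of_schroeder_eq (hs : 2 * s ^ 2 - (1 + x) * s + x = 0) :
    IsUnit (1 - s) :=
  .of_mul_eq_one (1 - x + 2 * s) (by linear_combination -hs)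

theorem two_mul_one_sub_sq_sub_one_sq_of_schroeder_eq
    (hs : 2 * s ^ 2 - (1 + x) * s + x = 0) :
    (2 * (1 - s) ^ 2 - 1) ^ 2 = (1 - 6 * x + x ^ 2) * (1 - s) ^ 2 := by
  linear_combination (2 * s ^ 2 + (x - 7) * s + (6 - x)) * hs

theorem discriminant_mul_sq_of_schroeder_eq (hs : 2 * s ^ 2 - (1 + x) * s + x = 0)
    {r t : A} (ht : t * (2 * (1 - s) ^ 2 - 1) = r * (1 - s) ^ 2) :
    (1 - 6 * x + x ^ 2) * t ^ 2 = r ^ 2 * (1 - s) ^ 2 := by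
  have hu : IsUnit ((1 - s) ^ 2) := (isUnit_one_sub_of_schroeder_eq hs).pow 2
  refine hu.mul_left_inj.mp ?_
  calc (1 - 6 * x + x ^ 2) * t ^ 2 * (1 - s) ^ 2
      = (t * (2 * (1 - s) ^ 2 - 1)) ^ 2 := by
        rw [mul_pow, two_mul_one_sub_sq_sub_one_sq_of_schroeder_eq hs]; ring
    _ = r ^ 2 * (1 - s) ^ 2 * (1 - s) ^ 2 := by rw [ht]; ring

end Schroeder

theorem schroeder_subtree_gf_relation_general
    (S : PowerSeries ℝ)
    (hS : 2 * S ^ 2 - (1 + PowerSeries.X) * S + PowerSeries.X = 0)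
    (R T : PowerSeries ℝ)
    (hT : T * (2 * (1 - S) ^ 2 - 1) = R * (1 - S) ^ 2) :
    (1 - 6 * PowerSeries.X + PowerSeries.X ^ 2) * T ^ 2 = R ^ 2 * (1 - S) ^ 2 :=
  discriminant_mul_sq_of_schroeder_eq hS hT

/-- Let `S ∈ ℝ⟦X⟧` be the unique formal power series with constant term 0
satisfying `2S² − (1 + X)S + X = 0` (the Schröder tree generating function). For all
formal power series `R, T` satisfying `T·(2(1 − S)² − 1) = R·(1 − S)²`, one has
`(1 − 6X + X²)·T² = R²·(1 − S)²` (i.e. `T = R·(3 − X + √(1−6X+X²))/(4√(1−6X+X²))`). -/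
theorem schroeder_subtree_gf_relation
    (S : PowerSeries ℝ) (hS0 : PowerSeries.constantCoeff S = 0)
    (hS : 2 * S ^ 2 - (1 + PowerSeries.X) * S + PowerSeries.X = 0)
    (R T : PowerSeries ℝ)
    (hT : T * (2 * (1 - S) ^ 2 - 1) = R * (1 - S) ^ 2) :
    (1 - 6 * PowerSeries.X + PowerSeries.X ^ 2) * T ^ 2 = R ^ 2 * (1 - S) ^ 2 :=
  schroeder_subtree_gf_relation_general S hS R T hT
end

section
/- With v(n) the total number of vertices in all Schröder trees with n leaves (defined by v(0) = 0, v(1) = 1, and v(n) = 4·∑_{i=1}^{n−1} s(i)·v(n−i) − v(n−1) + ∑_{i=1}^{n−1} s(i)·s(n−i) − s(n−1) for n ≥ 2), the ratio (n·s(n))/v(n) converges as n → ∞ to 2 − √2 ≈ 0.586; that is, the probability that a uniformly random vertex of a uniformly random Schröder tree with n leaves is a leaf tends to 2 − √2 as the number of leaves goes to infinity. -/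
/-!
The generating function `S = ∑ s(n) xⁿ` satisfies `2 S² = (1 + x) S - x`. Differentiating gives
`(1 - 6x + x²) S' = (x - 3) S + 1 - x`, i.e. the P-recurrence
`(m + 3) s(m + 3) = (6m + 9) s(m + 2) - m s(m + 1)`, and turns the defining relation
`V (1 + x - 4S) = S² + x - x S` of the vertex series into `4V = S + (1 + x) S' - 1`, that is
`4 v(n) = (n + 1) (s(n) + s(n + 1))`. By the P-recurrence the ratio `s(n + 1) / s(n)` follows the
contracting iteration `r ↦ 6 - 1 / r` up to `O(1/n)`, so it tends to the attracting fixed point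
`3 + 2√2`, and `n s(n) / v(n) ~ 4 / (1 + (3 + 2√2)) = 2 - √2`.
-/

open Filter PowerSeries

namespace PowerSeries

@[simp]
theorem coeff_ofNat_mul {R : Type*} [CommSemiring R] {a : ℕ} [a.AtLeastTwo] (p : R⟦X⟧) (n : ℕ) :
    coeff n ((ofNat(a) : R⟦X⟧) * p) = ofNat(a) * coeff n p := by
  rw [← map_ofNat C, coeff_C_mul]

theorem coeff_mk_mul_mk_eq_sum_Icc {R : Type*} [CommSemiring R] {a b : ℕ → R}
    (ha : a 0 = 0) (hb : b 0 = 0) (n : ℕ) :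
    coeff n (mk a * mk b) = ∑ i ∈ Finset.Icc 1 (n - 1), a i * b (n - i) := by
  rw [coeff_mul, Finset.Nat.sum_antidiagonal_eq_sum_range_succ
    (fun i j => coeff i (mk a) * coeff j (mk b))]
  simp only [coeff_mk]
  refine (Finset.sum_subset (fun i hi => ?_) fun i hi hni => ?_).symm
  · simp only [Finset.mem_Icc, Finset.mem_range] at hi ⊢
    omega
  · simp only [Finset.mem_Icc, Finset.mem_range] at hi hni
    obtain rfl | rfl : i = 0 ∨ i = n := by omega
    · simp [ha]
    · simp [hb]

end PowerSeries

section SchroederEquation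

variable {R : Type*} [CommRing R] {S : R⟦X⟧} (hS : 2 * S ^ 2 = (1 + X) * S - X)
include hS

theorem derivative_of_schroeder_eq : (4 * S - 1 - X) * d⁄dX R S = S - 1 := by
  have h2 : d⁄dX R (2 : R⟦X⟧) = 0 := by exact_mod_cast (d⁄dX R).map_natCast 2
  have h := congrArg (d⁄dX R) hS
  simp only [map_sub, Derivation.leibniz, Derivation.leibniz_pow, smul_eq_mul, derivative_X,
    map_add, Derivation.map_one_eq_zero, h2] at h
  linear_combination h

theorem linear_derivative_of_schroeder_eq :
    (1 - 6 * X + X ^ 2) * d⁄dX R S = (X - 3) * S + (1 - X) := by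
  linear_combination (4 * S - 1 - X) * derivative_of_schroeder_eq hS + (2 - 8 * d⁄dX R S) * hS

theorem four_mul_eq_of_schroeder_eq [IsDomain R] (hS0 : constantCoeff S = 0) {V : R⟦X⟧}
    (hV : V * (1 + X - 4 * S) = S ^ 2 + X - X * S) :
    4 * V = S + (1 + X) * d⁄dX R S - 1 := by
  have hne : (1 + X - 4 * S) ≠ 0 := fun h => by simpa [hS0] using congrArg constantCoeff h
  refine mul_right_cancel₀ hne ?_
  linear_combination 4 * hV + (1 + X) * derivative_of_schroeder_eq hS + 4 * hS

end SchroederEquation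

theorem schroeder_ratio_step {M A B : ℝ} (hM : 1 ≤ M) (hB : 3 ≤ B)
    (hBL : |B - (3 + 2 * Real.sqrt 2)| ≤ 10 / (M + 2))
    (hAB : (M + 3) * A * B = (6 * M + 9) * B - M) :
    3 ≤ A ∧ |A - (3 + 2 * Real.sqrt 2)| ≤ 10 / (M + 3) := by
  set L := 3 + 2 * Real.sqrt 2
  have hsq : Real.sqrt 2 ^ 2 = 2 := Real.sq_sqrt (by norm_num)
  have hL : L ^ 2 - 6 * L + 1 = 0 := by linear_combination 4 * hsq
  have hL_lb : 5.8 ≤ L := by nlinarith [Real.sqrt_nonneg 2]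
  have hL_ub : L ≤ 5.83 := by nlinarith [Real.sqrt_nonneg 2]
  -- `L` is the fixed point of `B ↦ 6 - 1 / B`, which contracts the error by the factor `1 / (L B)`.
  have herr : (A - L) * ((M + 3) * L * B) = -((3 * L - 9) * (L * B)) + M * (B - L) := by
    linear_combination L * hAB - M * B * hL
  have hLB : 17.4 ≤ L * B := by nlinarith
  have hMB : M * |B - L| ≤ 10 := by
    calc M * |B - L| ≤ M * (10 / (M + 2)) := by gcongr
      _ ≤ 10 := by rw [mul_div_assoc', div_le_iff₀ (by positivity)]; linarith
  have habs : |A - L| * ((M + 3) * L * B) ≤ (3 * L - 9) * (L * B) + 10 := by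
    rw [← abs_of_pos (show 0 < (M + 3) * L * B by positivity), ← abs_mul, herr]
    calc _ ≤ |-((3 * L - 9) * (L * B))| + |M * (B - L)| := abs_add_le _ _
      _ = (3 * L - 9) * (L * B) + M * |B - L| := by
        rw [abs_neg, abs_of_nonneg (by nlinarith), abs_mul, abs_of_nonneg (by linarith : 0 ≤ M)]
      _ ≤ _ := by linarith
  have hA : |A - L| ≤ 10 / (M + 3) := by
    rw [le_div_iff₀ (by positivity)]
    nlinarith [abs_nonneg (A - L)]
  refine ⟨?_, hA⟩
  have : 10 / (M + 3) ≤ 2.5 := by rw [div_le_iff₀ (by positivity)]; linarith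
  linarith [(abs_le.mp hA).1]

section Schroeder

variable {s : ℕ → ℕ} (hs0 : s 0 = 0) (hs1 : s 1 = 1)
  (hs : ∀ n, 2 ≤ n → s n = 2 * ∑ i ∈ Finset.Icc 1 (n - 1), s i * s (n - i) - s (n - 1))
  {v : ℕ → ℝ} (hv0 : v 0 = 0) (hv1 : v 1 = 1)
  (hv : ∀ n, 2 ≤ n →
    v n = 4 * (∑ i ∈ Finset.Icc 1 (n - 1), (s i : ℝ) * v (n - i)) - v (n - 1)
      + (∑ i ∈ Finset.Icc 1 (n - 1), (s i : ℝ) * (s (n - i) : ℝ)) - (s (n - 1) : ℝ))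

include hs1 in
theorem schroeder_pred_le_sum {n : ℕ} (hn : 2 ≤ n) :
    s (n - 1) ≤ ∑ i ∈ Finset.Icc 1 (n - 1), s i * s (n - i) := by
  have hle : s (n - 1) * s (n - (n - 1)) ≤ ∑ i ∈ Finset.Icc 1 (n - 1), s i * s (n - i) :=
    Finset.single_le_sum (f := fun i => s i * s (n - i)) (fun _ _ => Nat.zero_le _)
      (Finset.mem_Icc.mpr ⟨by omega, le_rfl⟩)
  rwa [show n - (n - 1) = 1 by omega, hs1, mul_one] at hle

include hs1 hs in
theorem schroeder_add_pred (n : ℕ) :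
    s (n + 2) + s (n + 1) = 2 * ∑ i ∈ Finset.Icc 1 (n + 1), s i * s (n + 2 - i) := by
  have hle := schroeder_pred_le_sum hs1 (n := n + 2) (by omega)
  have hrec := hs (n + 2) (by omega)
  simp only [show n + 2 - 1 = n + 1 from rfl] at hle hrec
  omega

include hs1 hs in
theorem schroeder_pos {n : ℕ} (hn : 1 ≤ n) : 0 < s n := by
  induction n, hn using Nat.le_induction with
  | base => omega
  | succ n hn ih =>
    have hle := schroeder_pred_le_sum hs1 (n := n + 1) (by omega)
    have hrec := hs (n + 1) (by omega)
    simp only [Nat.add_sub_cancel] at hle hrec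
    omega

include hs0 hs1 hs in
theorem schroeder_gf_quadratic :
    2 * (mk fun n => (s n : ℝ)) ^ 2 = (1 + X) * (mk fun n => (s n : ℝ)) - X := by
  ext n
  rw [sq, coeff_ofNat_mul, coeff_mk_mul_mk_eq_sum_Icc (by simp [hs0]) (by simp [hs0])]
  rcases n with _ | _ | n
  · simp [hs0]
  · simp [hs0, hs1, add_mul]
  · simp only [add_mul, one_mul, map_sub, map_add, coeff_mk, coeff_succ_X_mul, coeff_X,
      add_tsub_cancel_right, if_neg (by omega : n + 2 ≠ 1), sub_zero]
    exact_mod_cast (schroeder_add_pred hs1 hs n).symm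

include hs0 hs1 hs in
theorem schroeder_rec (m : ℕ) :
    ((m : ℝ) + 3) * s (m + 3) = (6 * m + 9) * s (m + 2) - m * s (m + 1) := by
  have h := congrArg (coeff (m + 2))
    (linear_derivative_of_schroeder_eq (schroeder_gf_quadratic hs0 hs1 hs))
  simp only [sub_mul, add_mul, one_mul, sq, mul_assoc, map_sub, map_add, coeff_ofNat_mul,
    coeff_succ_X_mul, coeff_derivative, coeff_mk, coeff_X, coeff_one,
    if_neg (show m + 2 ≠ 0 by omega), if_neg (show m + 2 ≠ 1 by omega)] at h
  push_cast at h
  linear_combination h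

include hs0 hs1 hs in
theorem schroeder_ratio_bound (m : ℕ) :
    3 ≤ (s (m + 3) : ℝ) / s (m + 2) ∧
      |(s (m + 3) : ℝ) / s (m + 2) - (3 + 2 * Real.sqrt 2)| ≤ 10 / ((m : ℝ) + 3) := by
  have hpos (n : ℕ) : (0 : ℝ) < s (n + 1) := by
    exact_mod_cast schroeder_pos hs1 hs (by omega)
  induction m with
  | zero =>
    have h := schroeder_rec hs0 hs1 hs 0
    have h3 : (s 3 : ℝ) / s 2 = 3 := by
      rw [div_eq_iff (hpos 1).ne']
      norm_num at h
      linarith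
    refine ⟨h3.ge, ?_⟩
    rw [h3, sub_add_cancel_left, abs_neg, abs_of_nonneg (by positivity), Nat.cast_zero,
      zero_add, le_div_iff₀ (by norm_num)]
    nlinarith [Real.sq_sqrt (show (0 : ℝ) ≤ 2 by norm_num), Real.sqrt_nonneg 2]
  | succ m ih =>
    have h := schroeder_rec hs0 hs1 hs (m + 1)
    have hAB : ((m : ℝ) + 1 + 3) * ((s (m + 4) : ℝ) / s (m + 3)) * (s (m + 3) / s (m + 2)) =
        (6 * (m + 1) + 9) * (s (m + 3) / s (m + 2)) - (m + 1) := by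
      have := hpos (m + 1); have := hpos (m + 2); have := hpos (m + 3)
      field_simp
      push_cast at h
      linear_combination h
    obtain ⟨hA, hAL⟩ := schroeder_ratio_step (by simp) ih.1 (by convert ih.2 using 2; ring) hAB
    exact ⟨hA, by convert hAL using 2; push_cast; ring⟩

include hs0 hs1 hs in
theorem tendsto_schroeder_ratio :
    Tendsto (fun n => (s (n + 1) : ℝ) / s n) atTop (nhds (3 + 2 * Real.sqrt 2)) := by
  refine (tendsto_add_atTop_iff_nat 2).mp ?_
  have h10 : Tendsto (fun m : ℕ => 10 / ((m : ℝ) + 3)) atTop (nhds 0) :=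
    tendsto_const_nhds.div_atTop (tendsto_atTop_add_const_right _ 3 tendsto_natCast_atTop_atTop)
  refine tendsto_iff_norm_sub_tendsto_zero.mpr
    (squeeze_zero (fun _ => norm_nonneg _) (fun m => ?_) h10)
  exact (schroeder_ratio_bound hs0 hs1 hs m).2

include hs0 hv0 hv1 hv in
theorem vertex_gf_mul_eq :
    mk v * (1 + X - 4 * mk fun n => (s n : ℝ)) =
      (mk fun n => (s n : ℝ)) ^ 2 + X - X * mk fun n => (s n : ℝ) := by
  set S := mk fun n => (s n : ℝ)
  rw [show mk v * (1 + X - 4 * S) = mk v + X * mk v - 4 * (S * mk v) by ring, sq]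
  ext n
  simp only [map_sub, map_add, coeff_ofNat_mul, S,
    coeff_mk_mul_mk_eq_sum_Icc (a := fun n => (s n : ℝ)) (b := fun n => (s n : ℝ))
      (by simp [hs0]) (by simp [hs0]),
    coeff_mk_mul_mk_eq_sum_Icc (a := fun n => (s n : ℝ)) (by simp [hs0]) hv0]
  rcases n with _ | _ | n
  · simp [hs0, hv0]
  · simp [hs0, hv0, hv1]
  · have hrec := hv (n + 2) (by omega)
    simp only [show n + 2 - 1 = n + 1 from rfl] at hrec
    simp only [coeff_mk, coeff_succ_X_mul, coeff_X, if_neg (show n + 2 ≠ 1 by omega),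
      Nat.add_sub_cancel]
    linarith

include hs0 hs1 hs hv0 hv1 hv in
theorem four_mul_vertex_eq (n : ℕ) :
    4 * v (n + 1) = ((n : ℝ) + 2) * (s (n + 1) + s (n + 2)) := by
  have h := congrArg (coeff (n + 1)) <| four_mul_eq_of_schroeder_eq
    (schroeder_gf_quadratic hs0 hs1 hs) (by simp [hs0]) (vertex_gf_mul_eq hs0 hv0 hv1 hv)
  simp only [add_mul, one_mul, map_sub, map_add, coeff_ofNat_mul, coeff_succ_X_mul,
    coeff_derivative, coeff_mk, coeff_one, if_neg (show n + 1 ≠ 0 by omega)] at h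
  push_cast at h
  linear_combination h

end Schroeder

/-- With `s` the Schröder tree counting sequence and `v(n)` the total
number of vertices in all Schröder trees with `n` leaves, the ratio `(n·s(n))/v(n)`
converges to `2 − √2` as `n → ∞`: the probability that a uniformly random vertex of a
uniformly random Schröder tree with `n` leaves is a leaf tends to `2 − √2`. -/
theorem schroeder_prob_leaf
    (s : ℕ → ℕ) (hs0 : s 0 = 0) (hs1 : s 1 = 1)
    (hs : ∀ n, 2 ≤ n →
      s n = 2 * ∑ i ∈ Finset.Icc 1 (n - 1), s i * s (n - i) - s (n - 1))
    (v : ℕ → ℝ) (hv0 : v 0 = 0) (hv1 : v 1 = 1)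
    (hv : ∀ n, 2 ≤ n →
      v n = 4 * (∑ i ∈ Finset.Icc 1 (n - 1), (s i : ℝ) * v (n - i)) - v (n - 1)
        + (∑ i ∈ Finset.Icc 1 (n - 1), (s i : ℝ) * (s (n - i) : ℝ)) - (s (n - 1) : ℝ)) :
    Tendsto (fun n : ℕ => ((n : ℝ) * (s n : ℝ)) / v n) atTop
      (nhds (2 - Real.sqrt 2)) := by
  have hden : 0 < 4 + 2 * Real.sqrt 2 := by positivity
  have hlim : Tendsto (fun n : ℕ => 4 * ((n : ℝ) / (n + 1)) / (1 + s (n + 1) / s n)) atTop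
      (nhds (4 * 1 / (1 + (3 + 2 * Real.sqrt 2)))) :=
    ((tendsto_natCast_div_add_atTop 1).const_mul 4).div
      (tendsto_const_nhds.add (tendsto_schroeder_ratio hs0 hs1 hs)) (by linarith)
  have hval : 4 * 1 / (1 + (3 + 2 * Real.sqrt 2)) = 2 - Real.sqrt 2 := by
    rw [div_eq_iff (by linarith)]
    nlinarith [Real.sq_sqrt (show (0 : ℝ) ≤ 2 by norm_num)]
  refine hval ▸ hlim.congr' (eventually_atTop.mpr ⟨1, fun n hn => ?_⟩)
  obtain ⟨m, rfl⟩ : ∃ m, n = m + 1 := ⟨n - 1, by omega⟩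
  have hv_eq := four_mul_vertex_eq hs0 hs1 hs hv0 hv1 hv m
  have h1 : (0 : ℝ) < s (m + 1) := by exact_mod_cast schroeder_pos hs1 hs (by omega)
  have h2 : (0 : ℝ) < s (m + 2) := by exact_mod_cast schroeder_pos hs1 hs (by omega)
  have hv_pos : 0 < v (m + 1) := by nlinarith
  field_simp
  push_cast
  linear_combination hv_eq
end
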